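/- arXiv:1610.05268 — 4 statements merged into one kernel-verified Lean document; each statement's English description precedes it below -/
import Mathlib

section
/- Let E be a topological graph with no singular vertices, let (x,n,x) ∈ Iso(Γ(E^∞,σ)), and let p,q ∈ ℕ satisfy p − q = n and σ^p(x) = σ^q(x). (1) If n > 0, then (x,n,x) ∈ Iso(Γ(E^∞,σ))° if and only if (x_{q+1},…,x_p) ∈ B^n. (2) If n < 0, then (x,n,x) ∈ Iso(Γ(E^∞,σ))° if and only if (x_{p+1},…,x_q) ∈ B^{-n}. -/
/-- A topological graph: vertex space `V`, edge space `E`, continuous range map `r`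
and locally homeomorphic source map `s`. -/
structure TopGraph (V E : Type) [TopologicalSpace V] [TopologicalSpace E] where
  r : E → V
  s : E → V
  r_cont : Continuous r
  s_locHomeo : IsLocalHomeomorph s

namespace TopGraph

variable {V E : Type} [TopologicalSpace V] [TopologicalSpace E] (G : TopGraph V E)

/-- The predicate that `μ : Fin n → E` is a (finite) path. -/
def IsPathFn {n : ℕ} (μ : Fin n → E) : Prop :=
  ∀ (i : ℕ) (h : i + 1 < n), G.s (μ ⟨i, Nat.lt_of_succ_lt h⟩) = G.r (μ ⟨i + 1, h⟩)

/-- The space `E^n` of paths of length `n`, with the subspace topology of the product. -/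
def Path (n : ℕ) : Type := {μ : Fin n → E // G.IsPathFn μ}

instance (n : ℕ) : TopologicalSpace (G.Path n) :=
  inferInstanceAs (TopologicalSpace {μ : Fin n → E // G.IsPathFn μ})

/-- `r^n(μ) = r(μ₁)`. -/
def pathRange {n : ℕ} (hn : 0 < n) (μ : G.Path n) : V := G.r (μ.1 ⟨0, hn⟩)

/-- `s^n(μ) = s(μₙ)`. -/
def pathSource {n : ℕ} (hn : 0 < n) (μ : G.Path n) : V :=
  G.s (μ.1 ⟨n - 1, Nat.sub_lt hn Nat.one_pos⟩)

/-- A cycle is a path whose range equals its source; its base point is its range. -/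
def IsCycle {n : ℕ} (hn : 0 < n) (μ : G.Path n) : Prop :=
  G.pathRange hn μ = G.pathSource hn μ

/-- A path `μ ∈ E^n` has an entrance if some edge `e ≠ μᵢ` has `r(e) = r(μᵢ)`. -/
def HasEntrance {n : ℕ} (μ : G.Path n) : Prop :=
  ∃ (i : Fin n) (e : E), G.r e = G.r (μ.1 i) ∧ e ≠ μ.1 i

theorem block_lt {n k : ℕ} (j : Fin k) (i : Fin n) : (j : ℕ) * n + (i : ℕ) < k * n := by
  have hi := i.2
  have hj := j.2
  calc (j : ℕ) * n + (i : ℕ) < ((j : ℕ) + 1) * n := by rw [Nat.add_mul, Nat.one_mul]; omega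
    _ ≤ k * n := Nat.mul_le_mul (Nat.succ_le_of_lt hj) le_rfl

/-- The `j`-th block of length `n` of a path of length `k * n`. -/
def block {n k : ℕ} (α : G.Path (k * n)) (j : Fin k) : G.Path n :=
  ⟨fun i => α.1 ⟨(j : ℕ) * n + (i : ℕ), block_lt j i⟩,
    fun i h => α.2 ((j : ℕ) * n + i) (block_lt j ⟨i + 1, h⟩)⟩

/-- `α ∈ kN` : every block of `α` lies in `N`. -/
def BlocksIn {n k : ℕ} (N : Set (G.Path n)) (α : G.Path (k * n)) : Prop :=
  ∀ j : Fin k, G.block α j ∈ N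

/-- The set `B^n` of cycles of length `n` admitting `k ≥ 1` and an open neighbourhood `N`
satisfying conditions (1) and (2) of Notation 3.3. -/
def B (n : ℕ) (hn : 0 < n) : Set (G.Path n) :=
  {μ | G.IsCycle hn μ ∧
    ∃ (k : ℕ) (hk : 0 < k) (N : Set (G.Path n)), IsOpen N ∧ μ ∈ N ∧
      (∀ α β : G.Path (k * n), G.BlocksIn N α → G.BlocksIn N β → α ≠ β →
        ¬ ∃ γ ∈ N, G.pathRange hn γ = G.pathSource (Nat.mul_pos hk hn) α ∧
          G.pathSource hn γ = G.pathSource (Nat.mul_pos hk hn) β) ∧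
      (∀ α : G.Path (k * n), G.BlocksIn N α →
        ¬ ∃ γ ∈ N, G.IsCycle hn γ ∧ G.HasEntrance γ ∧
          G.pathRange hn γ = G.pathSource (Nat.mul_pos hk hn) α)}

/-- The infinite path space `E^∞`, with the subspace topology of the product. -/
def InfPath : Type := {x : ℕ → E // ∀ i : ℕ, G.s (x i) = G.r (x (i + 1))}

instance : TopologicalSpace G.InfPath :=
  inferInstanceAs (TopologicalSpace {x : ℕ → E // ∀ i : ℕ, G.s (x i) = G.r (x (i + 1))})

/-- The one-sided shift on `E^∞`. -/
def shift (x : G.InfPath) : G.InfPath := ⟨fun i => x.1 (i + 1), fun i => x.2 (i + 1)⟩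

/-- The segment `x_{a+1} ⋯ x_{a+len}` (0-indexed: edges `a, …, a+len-1`) of an infinite path. -/
def segment (x : G.InfPath) (a len : ℕ) : G.Path len :=
  ⟨fun i => x.1 (a + (i : ℕ)), fun i _ => x.2 (a + i)⟩

/-- The boundary path groupoid `Γ(E^∞, σ)` as a set. -/
def Gamma : Type :=
  {g : G.InfPath × ℤ × G.InfPath //
    ∃ k l : ℕ, g.2.1 = (k : ℤ) - (l : ℤ) ∧ G.shift^[k] g.1 = G.shift^[l] g.2.2}

/-- Basic sets `U(U, W, k, l)` for the topology of `Γ(E^∞, σ)`. -/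
def basicSet (U W : Set G.InfPath) (k l : ℕ) : Set G.Gamma :=
  {g | g.1.1 ∈ U ∧ g.1.2.2 ∈ W ∧ g.1.2.1 = (k : ℤ) - (l : ℤ) ∧
    G.shift^[k] g.1.1 = G.shift^[l] g.1.2.2}

/-- The topology on `Γ(E^∞, σ)` generated by the sets `U(U, W, k, l)` with `U, W` open
and `σ^k`, `σ^l` injective on `U` resp. `W`. -/
instance : TopologicalSpace G.Gamma :=
  TopologicalSpace.generateFrom
    {S | ∃ (U W : Set G.InfPath) (k l : ℕ), IsOpen U ∧ IsOpen W ∧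
      Set.InjOn (G.shift^[k]) U ∧ Set.InjOn (G.shift^[l]) W ∧ S = G.basicSet U W k l}

/-- The isotropy group bundle `Iso(Γ(E^∞, σ))`. -/
def isoSet : Set G.Gamma := {g | g.1.1 = g.1.2.2}

/-- The interior of the isotropy group bundle. -/
def isoInterior : Set G.Gamma := interior G.isoSet

/-- The set `E^0_fin` of finite receivers. -/
def finRecv : Set V := {v | ∃ N : Set V, IsOpen N ∧ v ∈ N ∧ IsCompact (G.r ⁻¹' closure N)}

/-- The set `E^0_sce` of sources. -/
def sce : Set V := (closure (Set.range G.r))ᶜ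

/-- The set `E^0_rg` of regular vertices. -/
def rg : Set V := G.finRecv \ closure G.sce

/-- The set `E^0_sg` of singular vertices. -/
def sg : Set V := G.rgᶜ

/-- The set `V_n` of vertices having an open neighbourhood consisting of base points of
cycles without entrances in `E^n`. -/
def Vset (n : ℕ) (hn : 0 < n) : Set V :=
  {v | ∃ W : Set V, IsOpen W ∧ v ∈ W ∧
    ∀ w ∈ W, ∃ γ : G.Path n, G.IsCycle hn γ ∧ ¬ G.HasEntrance γ ∧ G.pathRange hn γ = w}

/-- `E` is topologically free if the set of base points of cycles without entrances has
empty interior. -/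
def TopologicallyFree : Prop :=
  interior {v : V | ∃ (n : ℕ) (hn : 0 < n) (γ : G.Path n),
    G.IsCycle hn γ ∧ ¬ G.HasEntrance γ ∧ G.pathRange hn γ = v} = ∅

/-- The groupoid `Γ(E^∞, σ)` is essentially free if the set of units with trivial
isotropy is dense. -/
def EssentiallyFree : Prop :=
  Dense {x : G.InfPath | ∀ g : G.Gamma, g.1.1 = x → g.1.2.2 = x → g.1.2.1 = 0}


/-! ### Auxiliary lemmas -/

theorem shift_coord {k : ℕ} (y : G.InfPath) (t : ℕ) :
    (G.shift^[k] y).1 t = y.1 (t + k) := by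
  induction k generalizing y with
  | zero => rfl
  | succ k ih =>
    rw [Function.iterate_succ_apply, ih (G.shift y)]
    rfl

theorem shift_eq_iff {k l : ℕ} (y z : G.InfPath) :
    G.shift^[k] y = G.shift^[l] z ↔ ∀ t, y.1 (t + k) = z.1 (t + l) := by
  constructor
  · intro h t
    rw [← shift_coord G y t, ← shift_coord G z t, h]
  · intro h
    apply Subtype.ext
    funext t
    rw [shift_coord, shift_coord]
    exact h t

theorem continuous_coord (t : ℕ) : Continuous (fun y : G.InfPath => y.1 t) :=
  (continuous_apply t).comp continuous_subtype_val

theorem continuous_shift : Continuous G.shift := by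
  apply Continuous.subtype_mk
  exact continuous_pi fun i => G.continuous_coord (i + 1)

theorem continuous_shift_iterate (k : ℕ) : Continuous (G.shift^[k]) := by
  induction k with
  | zero => exact continuous_id
  | succ k ih => rw [Function.iterate_succ]; exact ih.comp G.continuous_shift

theorem continuous_segment (a L : ℕ) : Continuous (fun y : G.InfPath => G.segment y a L) := by
  apply Continuous.subtype_mk
  exact continuous_pi fun i => G.continuous_coord (a + i)

theorem isOpen_cyl (M : ℕ) (O : ℕ → Set E) (hO : ∀ j, IsOpen (O j)) :
    IsOpen {y : G.InfPath | ∀ j, j < M → y.1 j ∈ O j} := by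
  have : {y : G.InfPath | ∀ j, j < M → y.1 j ∈ O j}
      = ⋂ j ∈ Finset.range M, (fun y : G.InfPath => y.1 j) ⁻¹' (O j) := by
    ext y
    simp [Finset.mem_range]
  rw [this]
  exact isOpen_biInter_finset fun j _ => (hO j).preimage (G.continuous_coord j)

/-- Extraction of a cylinder neighbourhood from an open set in `E^∞`. -/
theorem cylinder_extract {C : Set G.InfPath} (hC : IsOpen C) {x : G.InfPath} (hx : x ∈ C) :
    ∃ (M : ℕ) (O : ℕ → Set E), (∀ j, IsOpen (O j)) ∧ (∀ j, x.1 j ∈ O j) ∧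
      {y : G.InfPath | ∀ j, j < M → y.1 j ∈ O j} ⊆ C := by
  obtain ⟨C', hC', hCC⟩ := isOpen_induced_iff.1 hC
  have hx' : x.1 ∈ C' := by rw [← hCC] at hx; exact hx
  obtain ⟨I, u, hu, hsub⟩ := isOpen_pi_iff.1 hC' x.1 hx'
  refine ⟨(I.sup id) + 1, fun j => if h : j ∈ I then u j else Set.univ, ?_, ?_, ?_⟩
  · intro j
    by_cases h : j ∈ I
    · simpa [h] using (hu j h).1
    · simp [h]
  · intro j
    by_cases h : j ∈ I
    · simpa [h] using (hu j h).2
    · simp [h]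
  · intro y hy
    rw [← hCC]
    apply hsub
    intro a ha
    have h1 : a < I.sup id + 1 := Nat.lt_succ_of_le (Finset.le_sup (f := id) ha)
    have := hy a h1
    simp only [Set.mem_dite_univ_right] at this
    exact this ha

/-- `s`-injective open neighbourhoods of edges. -/
theorem s_inj_nbhd (e : E) : ∃ A : Set E, IsOpen A ∧ e ∈ A ∧ Set.InjOn G.s A := by
  obtain ⟨ph, hmem, hs⟩ := G.s_locHomeo e
  exact ⟨ph.source, ph.open_source, hmem, by rw [hs]; exact ph.injOn⟩

/-- `σ^m` is injective on cylinders with `s`-injective coordinate sets. -/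
theorem injOn_shift_cyl (m : ℕ) (S : ℕ → Set E) (hS : ∀ t, t < m → Set.InjOn G.s (S t)) :
    Set.InjOn (G.shift^[m]) {y : G.InfPath | ∀ t, t < m → y.1 t ∈ S t} := by
  intro y hy z hz he
  have tail : ∀ t, y.1 (t + m) = z.1 (t + m) := (G.shift_eq_iff y z).1 he
  have key : ∀ d t, y.1 (t + (m - d)) = z.1 (t + (m - d)) := by
    intro d
    induction d with
    | zero => simpa using tail
    | succ d ih =>
      intro t
      by_cases hd : d < m
      · have hmd : m - d = (m - (d + 1)) + 1 := by omega
        rcases Nat.eq_zero_or_pos t with ht | ht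
        · subst ht
          have hjm : m - (d + 1) < m := by omega
          have h1 : G.s (y.1 (m - (d + 1))) = G.r (y.1 (m - (d + 1) + 1)) :=
            y.2 (m - (d + 1))
          have h2 : G.s (z.1 (m - (d + 1))) = G.r (z.1 (m - (d + 1) + 1)) :=
            z.2 (m - (d + 1))
          have h3 : y.1 (m - (d + 1) + 1) = z.1 (m - (d + 1) + 1) := by
            simpa [hmd] using ih 0
          have h4 : G.s (y.1 (m - (d+1))) = G.s (z.1 (m - (d+1))) := by rw [h1, h2, h3]
          simpa using hS _ hjm (hy _ hjm) (hz _ hjm) h4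
        · have := ih (t - 1)
          have harith : t - 1 + (m - d) = t + (m - (d + 1)) := by omega
          rwa [harith] at this
      · have h0 : m - d = m - (d + 1) := by omega
        rw [← h0]; exact ih t
  apply Subtype.ext
  funext t
  have := key m t
  simpa using this

/-- Existence of an injectivity cylinder for `σ^m` around any point. -/
theorem exists_inj_cyl (m : ℕ) (w : G.InfPath) :
    ∃ D : Set G.InfPath, IsOpen D ∧ w ∈ D ∧ Set.InjOn (G.shift^[m]) D := by
  choose A hAo hAm hAi using fun t => G.s_inj_nbhd (w.1 t)
  exact ⟨{y | ∀ t, t < m → y.1 t ∈ A t}, G.isOpen_cyl m A hAo,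
    fun t _ => hAm t, G.injOn_shift_cyl m A (fun t _ => hAi t)⟩

/-- With no singular vertices, `r` is surjective. -/
theorem r_surj (hsg : G.sg = ∅) (v : V) [T2Space V] : ∃ e : E, G.r e = v := by
  have hrg : v ∈ G.rg := by
    by_contra h
    have : v ∈ G.sg := h
    rw [hsg] at this
    exact this
  obtain ⟨⟨Nv, hNo, hNv, hNc⟩, _⟩ := hrg
  have hsce : G.sce = ∅ := by
    by_contra h
    obtain ⟨u, hu⟩ := Set.nonempty_iff_ne_empty.2 h
    have : u ∈ closure G.sce := subset_closure hu
    have hurg : u ∈ G.rg := by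
      by_contra h'
      have : u ∈ G.sg := h'
      rw [hsg] at this
      exact this
    exact hurg.2 this
  have hdense : closure (Set.range G.r) = Set.univ := by
    have : (closure (Set.range G.r))ᶜ = ∅ := hsce
    rw [← Set.compl_empty, ← this, compl_compl]
  have hclosed : IsClosed (G.r '' (G.r ⁻¹' closure Nv)) :=
    (hNc.image G.r_cont).isClosed
  have himg : G.r '' (G.r ⁻¹' closure Nv) = Set.range G.r ∩ closure Nv := by
    rw [Set.image_preimage_eq_inter_range, Set.inter_comm]
  have hv : v ∈ closure (Set.range G.r ∩ closure Nv) := by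
    rw [mem_closure_iff]
    intro W hWo hWv
    have : v ∈ closure (Set.range G.r) := by rw [hdense]; trivial
    rw [mem_closure_iff] at this
    obtain ⟨u, hu1, hu2⟩ := this (W ∩ Nv) (hWo.inter hNo) ⟨hWv, hNv⟩
    exact ⟨u, hu1.1, hu2, subset_closure hu1.2⟩
  rw [← himg] at hv
  rw [hclosed.closure_eq] at hv
  obtain ⟨e, _, he⟩ := hv
  exact ⟨e, he⟩

/-- With no singular vertices, every vertex emits an infinite path. -/
theorem exists_fwd_path (hsg : G.sg = ∅) [T2Space V] (v : V) :
    ∃ ω : G.InfPath, G.r (ω.1 0) = v := by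
  choose f hf using fun u => G.r_surj hsg u
  refine ⟨⟨fun t => (fun e => f (G.s e))^[t] (f v), ?_⟩, ?_⟩
  · intro i
    show G.s ((fun e => f (G.s e))^[i] (f v)) = G.r ((fun e => f (G.s e))^[i + 1] (f v))
    rw [Function.iterate_succ_apply', hf]
  · simpa using hf v

/-- Backward-extension structure: shrink a cylinder pattern so that finite paths can be
extended backwards through it. -/
theorem bwd_prefix (x : G.InfPath) (q : ℕ) (O : ℕ → Set E) (hOo : ∀ j, IsOpen (O j))
    (hxO : ∀ j, x.1 j ∈ O j) :
    ∃ (A : ℕ → Set E) (Vq : Set V), (∀ j, IsOpen (A j)) ∧ (∀ j, x.1 j ∈ A j) ∧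
      (∀ j, A j ⊆ O j) ∧ IsOpen Vq ∧ G.r (x.1 q) ∈ Vq ∧
      ∀ v ∈ Vq, ∃ a : ℕ → E,
        (∀ j, j < q → a j ∈ A j) ∧ (∀ j, j + 1 < q → G.s (a j) = G.r (a (j + 1))) ∧
        (0 < q → G.s (a (q - 1)) = v) := by
  induction q with
  | zero =>
    exact ⟨O, Set.univ, hOo, hxO, fun j => le_refl _, isOpen_univ, trivial,
      fun v _ => ⟨x.1, fun j h => absurd h (by omega), fun j h => absurd h (by omega),
        fun h => absurd h (by omega)⟩⟩
  | succ q ih =>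
    obtain ⟨A', V', hA'o, hA'x, hA'O, hV'o, hV'x, hV'⟩ := ih
    obtain ⟨ph, hphm, hphs⟩ := G.s_locHomeo (x.1 q)
    set Aq : Set E := ph.source ∩ O q ∩ G.r ⁻¹' V' with hAq
    have hAqo : IsOpen Aq := ((ph.open_source.inter (hOo q)).inter
      (hV'o.preimage G.r_cont))
    have hAqx : x.1 q ∈ Aq := ⟨⟨hphm, hxO q⟩, hV'x⟩
    refine ⟨fun j => if j = q then Aq else A' j, G.s '' Aq, ?_, ?_, ?_, ?_, ?_, ?_⟩
    · intro j
      by_cases h : j = q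
      · simp only [h, if_pos rfl]; exact hAqo
      · simp only [if_neg h]; exact hA'o j
    · intro j
      by_cases h : j = q
      · subst h; simp only [if_pos rfl]; exact hAqx
      · simp only [if_neg h]; exact hA'x j
    · intro j
      by_cases h : j = q
      · subst h; simp only [if_pos rfl]; exact fun e he => he.1.2
      · simp only [if_neg h]; exact hA'O j
    · exact G.s_locHomeo.isOpenMap _ hAqo
    · have : G.r (x.1 (q + 1)) = G.s (x.1 q) := (x.2 q).symm
      rw [this]
      exact ⟨x.1 q, hAqx, rfl⟩
    · rintro v ⟨aq, haq, hsaq⟩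
      obtain ⟨a', ha'A, ha'p, ha's⟩ := hV' (G.r aq) haq.2
      refine ⟨fun j => if j = q then aq else a' j, ?_, ?_, ?_⟩
      · intro j hj
        by_cases h : j = q
        · subst h; simp only [if_pos rfl]; exact haq
        · simp only [if_neg h]; exact ha'A j (by omega)
      · intro j hj
        by_cases h : j + 1 = q
        · have hjq : j ≠ q := by omega
          simp only [if_neg hjq, h, if_pos rfl]
          have := ha's (by omega)
          have hj1 : q - 1 = j := by omega
          rw [hj1] at this
          exact this
        · have hjq : j ≠ q := by omega
          simp only [if_neg hjq, if_neg h]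
          exact ha'p j (by omega)
      · intro _
        simp only [Nat.add_sub_cancel, if_pos rfl]
        exact hsaq

/-- Concatenation of a finite head with an infinite path. -/
def concat (c : ℕ) (f : ℕ → E) (g : G.InfPath)
    (hf : ∀ j, j + 1 < c → G.s (f j) = G.r (f (j + 1)))
    (hlast : 0 < c → G.s (f (c - 1)) = G.r (g.1 0)) : G.InfPath :=
  ⟨fun j => if j < c then f j else g.1 (j - c), by
    intro i
    by_cases h1 : i + 1 < c
    · simp only [if_pos (by omega : i < c), if_pos h1]
      exact hf i h1
    · by_cases h2 : i < c
      · have hc : c = i + 1 := by omega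
        simp only [if_pos h2, if_neg h1]
        have := hlast (by omega)
        have h3 : c - 1 = i := by omega
        rw [h3] at this
        have h4 : i + 1 - c = 0 := by omega
        rw [h4]
        exact this
      · simp only [if_neg h2, if_neg h1]
        have h3 : i + 1 - c = (i - c) + 1 := by omega
        rw [h3]
        exact g.2 (i - c)⟩

theorem concat_lt {c : ℕ} {f : ℕ → E} {g : G.InfPath} {hf} {hlast} {j : ℕ} (h : j < c) :
    (G.concat c f g hf hlast).1 j = f j := if_pos h

theorem concat_ge {c : ℕ} {f : ℕ → E} {g : G.InfPath} {hf} {hlast} {j : ℕ} (h : c ≤ j) :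
    (G.concat c f g hf hlast).1 j = g.1 (j - c) := if_neg (by omega)

/-- The total function underlying a finite path, extended periodically. -/
def pathFun {L : ℕ} (hL : 0 < L) (μ : G.Path L) : ℕ → E :=
  fun t => μ.1 ⟨t % L, Nat.mod_lt t hL⟩

theorem pathFun_eq {L : ℕ} (hL : 0 < L) (μ : G.Path L) {t : ℕ} (h : t < L) :
    G.pathFun hL μ t = μ.1 ⟨t, h⟩ := by
  simp [pathFun, Nat.mod_eq_of_lt h]

theorem mod_pred {n t : ℕ} (hn : 0 < n) (ht : 0 < t) :
    (t % n = 0 ∧ (t - 1) % n = n - 1) ∨ (t % n = (t - 1) % n + 1) := by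
  have hdm := Nat.div_add_mod t n
  have hlt : t % n < n := Nat.mod_lt t hn
  by_cases hr : t % n = 0
  · left
    refine ⟨hr, ?_⟩
    have ha : 0 < t / n := by
      rcases Nat.eq_zero_or_pos (t / n) with h | h
      · rw [h, Nat.mul_zero] at hdm; omega
      · exact h
    obtain ⟨a', ha'⟩ : ∃ a', t / n = a' + 1 := ⟨t / n - 1, by omega⟩
    rw [ha'] at hdm
    have hr1 : n * (a' + 1) = a' * n + n := by ring
    have h2 : t - 1 = (n - 1) + a' * n := by omega
    rw [h2, Nat.add_mul_mod_self_right]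
    exact Nat.mod_eq_of_lt (by omega)
  · right
    have hcomm : n * (t / n) = t / n * n := by ring
    have h2 : t - 1 = (t % n - 1) + t / n * n := by omega
    rw [h2, Nat.add_mul_mod_self_right]
    rw [Nat.mod_eq_of_lt (show t % n - 1 < n by omega)]
    omega

theorem periodic_mod {x : G.InfPath} {q n : ℕ} (hn : 0 < n)
    (hper : ∀ t, x.1 (q + t + n) = x.1 (q + t)) : ∀ t, x.1 (q + t) = x.1 (q + t % n) := by
  intro t
  induction t using Nat.strong_induction_on with
  | _ t ih =>
    by_cases h : t < n
    · rw [Nat.mod_eq_of_lt h]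
    · have h1 : t = (t - n) + n := by omega
      have h2 : x.1 (q + t) = x.1 (q + (t - n)) := by
        rw [show q + t = q + (t - n) + n by omega]
        exact hper (t - n)
      rw [h2, ih (t - n) (by omega), ← Nat.mod_eq_sub_mod (show n ≤ t by omega)]

/-- The inversion map of the groupoid `Γ(E^∞, σ)`. -/
def swap (h : G.Gamma) : G.Gamma :=
  ⟨(h.1.2.2, -h.1.2.1, h.1.1), by
    obtain ⟨k, l, h1, h2⟩ := h.2
    exact ⟨l, k, by rw [h1]; ring, h2.symm⟩⟩

theorem swap_swap (h : G.Gamma) : G.swap (G.swap h) = h := by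
  apply Subtype.ext
  show (h.1.1, - -h.1.2.1, h.1.2.2) = h.1
  rw [neg_neg]

theorem swap_preimage_basic (U W : Set G.InfPath) (k l : ℕ) :
    G.swap ⁻¹' (G.basicSet U W k l) = G.basicSet W U l k := by
  ext h
  constructor
  · rintro ⟨h1, h2, h3, h4⟩
    exact ⟨h2, h1, by have h3' : -h.1.2.1 = (k : ℤ) - (l : ℤ) := h3; omega, h4.symm⟩
  · rintro ⟨h1, h2, h3, h4⟩
    exact ⟨h2, h1, by show -h.1.2.1 = (k : ℤ) - (l : ℤ); omega, h4.symm⟩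

theorem swap_continuous : Continuous G.swap := by
  rw [continuous_generateFrom_iff]
  rintro S ⟨U, W, k, l, hU, hW, hkU, hlW, rfl⟩
  rw [G.swap_preimage_basic U W k l]
  exact TopologicalSpace.GenerateOpen.basic _ ⟨W, U, l, k, hW, hU, hlW, hkU, rfl⟩

theorem swap_mem_interior {h : G.Gamma} (hh : h ∈ G.isoInterior) :
    G.swap h ∈ G.isoInterior := by
  have hQo : IsOpen (G.swap ⁻¹' (interior G.isoSet)) :=
    isOpen_interior.preimage G.swap_continuous
  have hQs : G.swap ⁻¹' (interior G.isoSet) ⊆ G.isoSet := by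
    intro a ha
    have : G.swap a ∈ G.isoSet := interior_subset ha
    exact (this : (G.swap a).1.1 = (G.swap a).1.2.2).symm
  have hm : G.swap h ∈ G.swap ⁻¹' (interior G.isoSet) := by
    show G.swap (G.swap h) ∈ interior G.isoSet
    rw [G.swap_swap]
    exact hh
  exact interior_maximal hQs hQo hm

theorem swap_interior_iff (h : G.Gamma) :
    h ∈ G.isoInterior ↔ G.swap h ∈ G.isoInterior := by
  constructor
  · exact G.swap_mem_interior
  · intro hh
    have := G.swap_mem_interior hh
    rwa [G.swap_swap] at this

theorem shift_add_shift (x : G.InfPath) {p q : ℕ} (m : ℕ)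
    (h : G.shift^[p] x = G.shift^[q] x) :
    G.shift^[p + m] x = G.shift^[q + m] x := by
  rw [Nat.add_comm p m, Nat.add_comm q m, Function.iterate_add_apply,
    Function.iterate_add_apply, h]

theorem lemA_upgrade (ν : ℤ) (x : G.InfPath) (p q m₁ m : ℕ) (hm : m₁ ≤ m)
    (hshift : G.shift^[p] x = G.shift^[q] x) (O : Set G.Gamma) (C₁ : Set G.InfPath)
    (hC₁o : IsOpen C₁) (hx : x ∈ C₁)
    (hcond : ∀ h : G.Gamma, h.1.2.1 = ν → h.1.1 ∈ C₁ → h.1.2.2 ∈ C₁ →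
      G.shift^[p + m₁] h.1.1 = G.shift^[q + m₁] h.1.2.2 → h ∈ O) :
    ∃ C, IsOpen C ∧ x ∈ C ∧
      ∀ h : G.Gamma, h.1.2.1 = ν → h.1.1 ∈ C → h.1.2.2 ∈ C →
        G.shift^[p + m] h.1.1 = G.shift^[q + m] h.1.2.2 → h ∈ O := by
  obtain ⟨D, hDo, hDx, hDi⟩ := G.exists_inj_cyl (m - m₁) (G.shift^[p + m₁] x)
  refine ⟨C₁ ∩ ((G.shift^[p + m₁]) ⁻¹' D) ∩ ((G.shift^[q + m₁]) ⁻¹' D),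
    (hC₁o.inter (hDo.preimage (G.continuous_shift_iterate _))).inter
      (hDo.preimage (G.continuous_shift_iterate _)), ⟨⟨hx, hDx⟩, ?_⟩, ?_⟩
  · show G.shift^[q + m₁] x ∈ D
    rw [← G.shift_add_shift x m₁ hshift]
    exact hDx
  · rintro h hν ⟨⟨h1C, h1D⟩, h1D'⟩ ⟨⟨h2C, h2D⟩, h2D'⟩ hσ
    have e1 : G.shift^[p + m] h.1.1 = G.shift^[m - m₁] (G.shift^[p + m₁] h.1.1) := by
      rw [← Function.iterate_add_apply]
      congr 1
      omega
    have e2 : G.shift^[q + m] h.1.2.2 = G.shift^[m - m₁] (G.shift^[q + m₁] h.1.2.2) := by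
      rw [← Function.iterate_add_apply]
      congr 1
      omega
    rw [e1, e2] at hσ
    exact hcond h hν h1C h2C (hDi h1D h2D' hσ)

theorem lemA (g : G.Gamma) (hiso : g ∈ G.isoSet) (p q : ℕ)
    (hpq : (p : ℤ) - (q : ℤ) = g.1.2.1) (hshift : G.shift^[p] g.1.1 = G.shift^[q] g.1.1)
    (O : Set G.Gamma) (hO : IsOpen O) (hg : g ∈ O) :
    ∃ (m : ℕ) (C : Set G.InfPath), IsOpen C ∧ g.1.1 ∈ C ∧
      ∀ h : G.Gamma, h.1.2.1 = g.1.2.1 → h.1.1 ∈ C → h.1.2.2 ∈ C →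
        G.shift^[p + m] h.1.1 = G.shift^[q + m] h.1.2.2 → h ∈ O := by
  have hgen : TopologicalSpace.GenerateOpen
      {S | ∃ (U W : Set G.InfPath) (k l : ℕ), IsOpen U ∧ IsOpen W ∧
        Set.InjOn (G.shift^[k]) U ∧ Set.InjOn (G.shift^[l]) W ∧ S = G.basicSet U W k l} O :=
    hO
  clear hO
  induction hgen with
  | @basic S hS =>
    obtain ⟨U, W, k, l, hU, hW, hkU, hlW, rfl⟩ := hS
    obtain ⟨hg1, hg2, hkl, hσ⟩ := hg
    have hxW : g.1.1 ∈ W := by rw [hiso]; exact hg2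
    have hσx : G.shift^[k] g.1.1 = G.shift^[l] g.1.1 := by
      conv_rhs => rw [hiso]
      exact hσ
    have hd : p + l = q + k := by
      have : (p : ℤ) - (q : ℤ) = (k : ℤ) - (l : ℤ) := by rw [hpq, hkl]
      omega
    obtain ⟨D, hDo, hDx, hDi⟩ := G.exists_inj_cyl (p + l) (G.shift^[k] g.1.1)
    refine ⟨k + l, U ∩ W ∩ ((G.shift^[k]) ⁻¹' D) ∩ ((G.shift^[l]) ⁻¹' D),
      ((hU.inter hW).inter (hDo.preimage (G.continuous_shift_iterate _))).inter
        (hDo.preimage (G.continuous_shift_iterate _)),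
      ⟨⟨⟨hg1, hxW⟩, hDx⟩, by show G.shift^[l] g.1.1 ∈ D; rw [← hσx]; exact hDx⟩, ?_⟩
    rintro h hν ⟨⟨⟨h1U, _⟩, h1D⟩, _⟩ ⟨⟨⟨_, h2W⟩, _⟩, h2D⟩ hσh
    have e1 : G.shift^[p + (k + l)] h.1.1 = G.shift^[p + l] (G.shift^[k] h.1.1) := by
      rw [← Function.iterate_add_apply]
      congr 1
      omega
    have e2 : G.shift^[q + (k + l)] h.1.2.2 = G.shift^[p + l] (G.shift^[l] h.1.2.2) := by
      rw [← Function.iterate_add_apply]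
      congr 1
      omega
    rw [e1, e2] at hσh
    exact ⟨h1U, h2W, by rw [hν, ← hkl], hDi h1D h2D hσh⟩
  | univ =>
    exact ⟨0, Set.univ, isOpen_univ, trivial, fun h _ _ _ _ => trivial⟩
  | inter O₁ O₂ h₁ h₂ ih₁ ih₂ =>
    obtain ⟨m₁, C₁, hC₁o, hxC₁, hc₁⟩ := ih₁ hg.1
    obtain ⟨m₂, C₂, hC₂o, hxC₂, hc₂⟩ := ih₂ hg.2
    obtain ⟨C₁', hC₁'o, hxC₁', hc₁'⟩ := G.lemA_upgrade g.1.2.1 g.1.1 p q m₁ (max m₁ m₂)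
      (le_max_left _ _) hshift O₁ C₁ hC₁o hxC₁ hc₁
    obtain ⟨C₂', hC₂'o, hxC₂', hc₂'⟩ := G.lemA_upgrade g.1.2.1 g.1.1 p q m₂ (max m₁ m₂)
      (le_max_right _ _) hshift O₂ C₂ hC₂o hxC₂ hc₂
    exact ⟨max m₁ m₂, C₁' ∩ C₂', hC₁'o.inter hC₂'o, ⟨hxC₁', hxC₂'⟩,
      fun h hν h1 h2 hσ => ⟨hc₁' h hν h1.1 h2.1 hσ, hc₂' h hν h1.2 h2.2 hσ⟩⟩
  | sUnion T hT ih =>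
    obtain ⟨O', hO'T, hgO'⟩ := hg
    obtain ⟨m, C, hCo, hxC, hc⟩ := ih O' hO'T hgO'
    exact ⟨m, C, hCo, hxC, fun h hν h1 h2 hσ => ⟨O', hO'T, hc h hν h1 h2 hσ⟩⟩

theorem mul_add_mod' (j n i : ℕ) : (j * n + i) % n = i % n := by
  rw [Nat.mul_comm, Nat.mul_add_mod]

theorem segment_congr (y : G.InfPath) {a a' : ℕ} (L : ℕ) (h : a = a') :
    G.segment y a L = G.segment y a' L := by rw [h]

theorem segment_coord (y : G.InfPath) (a L : ℕ) (i : Fin L) :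
    (G.segment y a L).1 i = y.1 (a + i) := rfl

theorem block_segment (y : G.InfPath) (a k n : ℕ) (j : Fin k) :
    G.block (G.segment y a (k * n)) j = G.segment y (a + (j : ℕ) * n) n :=
  Subtype.ext (funext fun i => congrArg y.1 (Nat.add_assoc a ((j : ℕ) * n) i).symm)

/-- The `⇐` direction in the case `q < p`. -/
theorem main_pos_mpr (g : G.Gamma) (hiso : g ∈ G.isoSet) (p q : ℕ)
    (hpq : (p : ℤ) - (q : ℤ) = g.1.2.1)
    (hshift : G.shift^[p] g.1.1 = G.shift^[q] g.1.1) (hq : q < p) (hn : 0 < p - q)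
    (hB : G.segment g.1.1 q (p - q) ∈ G.B (p - q) hn) : g ∈ G.isoInterior := by
  set x := g.1.1 with hx
  set n := p - q with hdefn
  obtain ⟨hcyc, k, hk, N, hNo, hμN, hc1, hc2⟩ := hB
  have hx1 : ∀ t, x.1 (t + p) = x.1 (t + q) := (G.shift_eq_iff x x).1 hshift
  have hxper : ∀ t, x.1 (q + t + n) = x.1 (q + t) := by
    intro t
    have := hx1 t
    rw [show t + p = q + t + n by omega, show t + q = q + t by omega] at this
    exact this
  have hxmod : ∀ t, x.1 (q + t) = x.1 (q + t % n) := G.periodic_mod hn hxper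
  choose T hTo hTx hTi using fun t => G.s_inj_nbhd (x.1 t)
  set U : Set G.InfPath := {y | (∀ t, t < p → y.1 t ∈ T t) ∧
    ∀ j, j < k + 1 → G.segment y (q + j * n) n ∈ N} with hU
  have hUo : IsOpen U := by
    have h1 : U = {y : G.InfPath | ∀ t, t < p → y.1 t ∈ T t} ∩
        ⋂ j ∈ Finset.range (k + 1), (fun y => G.segment y (q + j * n) n) ⁻¹' N := by
      ext y
      simp only [hU, Set.mem_setOf_eq, Set.mem_inter_iff, Set.mem_iInter, Set.mem_preimage,
        Finset.mem_range]
    rw [h1]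
    exact (G.isOpen_cyl p T hTo).inter
      (isOpen_biInter_finset fun j _ => hNo.preimage (G.continuous_segment _ _))
  have hUp : Set.InjOn (G.shift^[p]) U :=
    (G.injOn_shift_cyl p T fun t _ => hTi t).mono fun y hy t ht => hy.1 t ht
  have hUq : Set.InjOn (G.shift^[q]) U := by
    refine Set.InjOn.mono ?_ (G.injOn_shift_cyl q T fun t _ => hTi t)
    intro y hy t ht
    exact hy.1 t (by omega)
  have hxU : x ∈ U := by
    refine ⟨fun t _ => hTx t, fun j hj => ?_⟩
    have heq : G.segment x (q + j * n) n = G.segment x q n := by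
      apply Subtype.ext
      funext i
      show x.1 (q + j * n + i) = x.1 (q + i)
      rw [show q + j * n + (i : ℕ) = q + (j * n + i) from Nat.add_assoc _ _ _,
        hxmod (j * n + i), mul_add_mod' j n i, Nat.mod_eq_of_lt i.2]
    rw [heq]
    exact hμN
  have hsub : G.basicSet U U p q ⊆ G.isoSet := by
    rintro h ⟨hy, hz, hν, hσ⟩
    set y := h.1.1 with hydef
    set z := h.1.2.2 with hzdef
    have hyz : ∀ t, y.1 (t + p) = z.1 (t + q) := (G.shift_eq_iff y z).1 hσ
    have hkn : 0 < k * n := Nat.mul_pos hk hn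
    -- blocks
    have hαB : G.BlocksIn N (G.segment y q (k * n)) := by
      intro j
      rw [G.block_segment]
      exact hy.2 j (by omega)
    have hβB : G.BlocksIn N (G.segment y (q + n) (k * n)) := by
      intro j
      rw [G.block_segment, G.segment_congr y n (show q + n + (j : ℕ) * n = q + ((j : ℕ) + 1) * n by ring)]
      exact hy.2 ((j : ℕ) + 1) (by omega)
    -- α = β
    have hαβ : G.segment y q (k * n) = G.segment y (q + n) (k * n) := by
      by_contra hne
      refine hc1 _ _ hαB hβB hne ⟨G.segment y (q + k * n) n, hy.2 k (by omega), ?_, ?_⟩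
      · show G.r (y.1 (q + k * n + 0)) = G.s (y.1 (q + (k * n - 1)))
        rw [y.2 (q + (k * n - 1)), show q + (k * n - 1) + 1 = q + k * n + 0 by omega]
      · show G.s (y.1 (q + k * n + (n - 1))) = G.s (y.1 (q + n + (k * n - 1)))
        rw [show q + n + (k * n - 1) = q + k * n + (n - 1) by omega]
    have hpery : ∀ t, t < k * n → y.1 (q + t) = y.1 (q + n + t) := by
      intro t ht
      have := congrFun (congrArg Subtype.val hαβ) ⟨t, ht⟩
      exact this
    -- the cycle c
    have hcN : G.segment y q n ∈ N := by
      have := hy.2 0 (by omega)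
      rwa [G.segment_congr y n (show q + 0 * n = q by ring)] at this
    have hccyc : G.IsCycle hn (G.segment y q n) := by
      show G.r (y.1 (q + 0)) = G.s (y.1 (q + (n - 1)))
      have h1 := y.2 (q + (n - 1))
      have h2 := hpery 0 hkn
      rw [Nat.add_zero] at h2
      rw [show q + n + 0 = q + n by omega] at h2
      rw [h1, show q + (n - 1) + 1 = q + n by omega, Nat.add_zero, h2]
    have hbase : ∀ j, j ≤ k → y.1 (q + j * n) = y.1 q := by
      intro j
      induction j with
      | zero => intro _; rw [show q + 0 * n = q by ring]
      | succ j ih =>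
        intro hj
        have hlt : j * n < k * n := by
          apply Nat.mul_lt_mul_of_lt_of_le (by omega) (le_refl n)
          omega
        have := hpery (j * n) hlt
        rw [show q + n + j * n = q + (j + 1) * n by ring] at this
        rw [← this, ih (by omega)]
    have hent : ¬ G.HasEntrance (G.segment y q n) := by
      intro hent
      refine hc2 _ hαB ⟨G.segment y q n, hcN, hccyc, hent, ?_⟩
      show G.r (y.1 (q + 0)) = G.s (y.1 (q + (k * n - 1)))
      have h1 := y.2 (q + (k * n - 1))
      rw [h1, show q + (k * n - 1) + 1 = q + k * n by omega, hbase k (le_refl k),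
        Nat.add_zero]
    have hne' : ∀ (i : Fin n) (e : E), G.r e = G.r ((G.segment y q n).1 i) →
        e = (G.segment y q n).1 i := by
      unfold HasEntrance at hent
      push_neg at hent
      exact hent
    have hyc : ∀ t, y.1 (q + t) = y.1 (q + t % n) := by
      intro t
      induction t using Nat.strong_induction_on with
      | _ t ih =>
        by_cases hlt : t < n
        · rw [Nat.mod_eq_of_lt hlt]
        · have ht1 : 0 < t := by omega
          have hr1 : G.r (y.1 (q + t)) = G.r (y.1 (q + t % n)) := by
            have hp1 := y.2 (q + (t - 1))
            rw [show q + (t - 1) + 1 = q + t by omega] at hp1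
            have hih := ih (t - 1) (by omega)
            rcases mod_pred hn ht1 with ⟨hm0, hm1⟩ | hm2
            · rw [← hp1, hih, hm1, hm0]
              have hp2 := y.2 (q + (n - 1))
              rw [show q + (n - 1) + 1 = q + n by omega] at hp2
              rw [hp2]
              have h2 := hpery 0 hkn
              rw [Nat.add_zero] at h2
              rw [show q + n + 0 = q + n by omega] at h2
              rw [Nat.add_zero, ← h2]
            · have hp3 := y.2 (q + (t - 1) % n)
              rw [← hp1, hih, hp3, show q + (t - 1) % n + 1 = q + t % n by omega]
          have := hne' ⟨t % n, Nat.mod_lt t hn⟩ (y.1 (q + t)) hr1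
          exact this
    have hmain : G.shift^[q] y = G.shift^[q] z := by
      rw [G.shift_eq_iff]
      intro t
      have h1 : z.1 (t + q) = y.1 (t + p) := (hyz t).symm
      rw [h1, show t + p = q + (t + n) by omega, hyc (t + n), Nat.add_mod_right,
        ← hyc t, show q + t = t + q by omega]
    exact hUq hy hz hmain
  have hopen : IsOpen (G.basicSet U U p q) := by
    exact TopologicalSpace.GenerateOpen.basic _ ⟨U, U, p, q, hUo, hUo, hUp, hUq, rfl⟩
  have hgmem : g ∈ G.basicSet U U p q := by
    refine ⟨hxU, ?_, hpq.symm, ?_⟩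
    · show g.1.2.2 ∈ U
      rw [← hiso]
      exact hxU
    · show G.shift^[p] g.1.1 = G.shift^[q] g.1.2.2
      conv_rhs => rw [← hiso]
      exact hshift
  exact mem_interior.2 ⟨G.basicSet U U p q, hsub, hopen, hgmem⟩

theorem pathFun_path {n : ℕ} (hn : 0 < n) (γ : G.Path n) (hγ : G.IsCycle hn γ) (j : ℕ) :
    G.s (G.pathFun hn γ j) = G.r (G.pathFun hn γ (j + 1)) := by
  unfold pathFun
  rcases mod_pred hn (show 0 < j + 1 by omega) with ⟨hm0, hm1⟩ | hm2
  · simp only [Nat.add_sub_cancel] at hm1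
    simp only [hm0, hm1]
    exact hγ.symm
  · simp only [Nat.add_sub_cancel] at hm2
    simp only [hm2]
    have hlt : j % n + 1 < n := by
      have := Nat.mod_lt (j + 1) hn
      omega
    exact γ.2 (j % n) hlt

theorem pathFun_path' {n : ℕ} (hn : 0 < n) (γ : G.Path n) (hγ : G.IsCycle hn γ) (d : ℕ)
    (hd : 0 < d) : G.s (G.pathFun hn γ (d - 1)) = G.r (G.pathFun hn γ d) := by
  have := G.pathFun_path hn γ hγ (d - 1)
  rwa [show d - 1 + 1 = d by omega] at this

theorem pathFun_mod {n : ℕ} (hn : 0 < n) (γ : G.Path n) (t : ℕ) (i : Fin n)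
    (h : t % n = (i : ℕ)) : G.pathFun hn γ t = γ.1 i :=
  congrArg γ.1 (Fin.ext h)

set_option maxHeartbeats 1000000 in
/-- The `⇒` direction in the case `q < p`. -/
theorem main_pos_mp [T2Space V] (hsg : G.sg = ∅) (g : G.Gamma) (hiso : g ∈ G.isoSet)
    (p q : ℕ) (hpq : (p : ℤ) - (q : ℤ) = g.1.2.1)
    (hshift : G.shift^[p] g.1.1 = G.shift^[q] g.1.1) (hq : q < p) (hn : 0 < p - q)
    (hint : g ∈ G.isoInterior) :
    G.segment g.1.1 q (p - q) ∈ G.B (p - q) hn := by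
  set x := g.1.1 with hxdef
  set n := p - q with hndef
  have hx1 : ∀ t, x.1 (t + p) = x.1 (t + q) := (G.shift_eq_iff x x).1 hshift
  have hxper : ∀ t, x.1 (q + t + n) = x.1 (q + t) := by
    intro t
    have := hx1 t
    rw [show t + p = q + t + n by omega, show t + q = q + t by omega] at this
    exact this
  have hxmod : ∀ t, x.1 (q + t) = x.1 (q + t % n) := G.periodic_mod hn hxper
  obtain ⟨m, C, hCo, hxC, hC⟩ := G.lemA g hiso p q hpq hshift _ isOpen_interior hint
  obtain ⟨M, O, hOo, hxO, hcyl⟩ := G.cylinder_extract hCo hxC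
  obtain ⟨A, Vq, hAo, hAx, hAO, hVo, hVx, hVext⟩ := G.bwd_prefix x q O hOo hxO
  choose T hTo hTx hTi using fun t => G.s_inj_nbhd (x.1 t)
  set O'' : ℕ → Set E := fun i => T (q + i) ∩
    (⋂ j ∈ Finset.range M, (if q ≤ j ∧ (j - q) % n = i then O j else Set.univ)) ∩
    (if i = 0 then G.r ⁻¹' Vq else Set.univ) with hO''def
  have hO''o : ∀ i, IsOpen (O'' i) := by
    intro i
    refine ((hTo _).inter (isOpen_biInter_finset fun j _ => ?_)).inter ?_
    · split
      · exact hOo j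
      · exact isOpen_univ
    · split
      · exact hVo.preimage G.r_cont
      · exact isOpen_univ
  have hO''x : ∀ i, x.1 (q + i) ∈ O'' i := by
    intro i
    refine ⟨⟨hTx _, ?_⟩, ?_⟩
    · apply Set.mem_iInter₂.2
      intro j hj
      split
      · rename_i hcond
        obtain ⟨hqj, hmod⟩ := hcond
        have h1 : j = q + (j - q) := by omega
        have h2 := hxmod (j - q)
        rw [hmod] at h2
        rw [← h2, ← h1]
        exact hxO j
      · trivial
    · split
      · rename_i hi
        subst hi
        show G.r (x.1 (q + 0)) ∈ Vq
        rw [Nat.add_zero]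
        exact hVx
      · trivial
  have hO''T : ∀ i, O'' i ⊆ T (q + i) := fun i e he => he.1.1
  have hO''sub : ∀ j, j < M → q ≤ j → O'' ((j - q) % n) ⊆ O j := by
    intro j hjM hqj e he
    have := Set.mem_iInter₂.1 he.1.2 j (Finset.mem_range.2 hjM)
    rw [if_pos ⟨hqj, rfl⟩] at this
    exact this
  have hO''V : O'' 0 ⊆ G.r ⁻¹' Vq := by
    intro e he
    have := he.2
    rwa [if_pos rfl] at this
  set N : Set (G.Path n) := {γ | ∀ i : Fin n, γ.1 i ∈ O'' i} with hNdef
  have hNo : IsOpen N := by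
    have : N = ⋂ i : Fin n, (fun γ : G.Path n => γ.1 i) ⁻¹' O'' (i : ℕ) := by
      ext γ
      simp [hNdef]
    rw [this]
    exact isOpen_iInter_of_finite fun i =>
      (hO''o _).preimage ((continuous_apply (i : Fin n)).comp continuous_subtype_val)
  have hμN : G.segment x q n ∈ N := fun i => hO''x i
  set k : ℕ := M + m + 1 with hkdef
  have hk : 0 < k := by omega
  have hkn : 0 < k * n := Nat.mul_pos hk hn
  have hknpq : k * n = k * (p - q) := rfl
  have hkk : k ≤ k * n := Nat.le_mul_of_pos_right k hn
  have hmm : m ≤ k * n := by omega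
  have hMq : M ≤ q + k * n := by omega
  set D : Set G.InfPath := {u | ∀ t, t < k * n - m → u.1 t ∈ O'' ((m + t) % n)} with hDdef
  have hDi : Set.InjOn (G.shift^[k * n - m]) D :=
    G.injOn_shift_cyl _ _ fun t _ => Set.InjOn.mono (hO''T _) (hTi _)
  -- the key rigidity claim
  have key : ∀ y z : G.InfPath,
      (∀ j, j < M → y.1 j ∈ O j) → (∀ j, j < M → z.1 j ∈ O j) →
      (∀ t, t < k * n - m → y.1 (p + m + t) ∈ O'' ((m + t) % n)) →
      (∀ t, t < k * n - m → z.1 (q + m + t) ∈ O'' ((m + t) % n)) →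
      (∀ t, y.1 (t + (p + k * n)) = z.1 (t + (q + k * n))) → y = z := by
    intro y z hyM hzM hyD hzD htail
    have hw : ∃ k' l' : ℕ, ((y, g.1.2.1, z) : G.InfPath × ℤ × G.InfPath).2.1 = (k' : ℤ) - l' ∧
        G.shift^[k'] y = G.shift^[l'] z := by
      refine ⟨p + k * n, q + k * n, ?_, (G.shift_eq_iff y z).2 htail⟩
      rw [← hpq]
      push_cast
      omega
    set h : G.Gamma := ⟨(y, g.1.2.1, z), hw⟩ with hhdef
    have hyD' : G.shift^[p + m] y ∈ D := by
      intro t ht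
      rw [G.shift_coord, show t + (p + m) = p + m + t by omega]
      exact hyD t ht
    have hzD' : G.shift^[q + m] z ∈ D := by
      intro t ht
      rw [G.shift_coord, show t + (q + m) = q + m + t by omega]
      exact hzD t ht
    have hσ : G.shift^[k * n - m] (G.shift^[p + m] y)
        = G.shift^[k * n - m] (G.shift^[q + m] z) := by
      rw [← Function.iterate_add_apply, ← Function.iterate_add_apply,
        show k * n - m + (p + m) = p + k * n by omega,
        show k * n - m + (q + m) = q + k * n by omega]
      exact (G.shift_eq_iff y z).2 htail
    have hpm := hDi hyD' hzD' hσ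
    have hmem := hC h rfl (hcyl fun j hj => hyM j hj) (hcyl fun j hj => hzM j hj) hpm
    have hiso' : h ∈ G.isoSet := interior_subset hmem
    exact hiso'
  -- coordinates of paths with blocks in N
  have hblock : ∀ (α : G.Path (k * n)), G.BlocksIn N α →
      ∀ t (ht : t < k * n), α.1 ⟨t, ht⟩ ∈ O'' (t % n) := by
    intro α hB t ht
    have hdiv : t / n < k := (Nat.div_lt_iff_lt_mul hn).2 (by omega)
    have h1 := hB ⟨t / n, hdiv⟩ ⟨t % n, Nat.mod_lt t hn⟩
    have he : (t / n) * n + t % n = t := by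
      rw [Nat.mul_comm]
      exact Nat.div_add_mod t n
    have h2 : (G.block α ⟨t / n, hdiv⟩).1 ⟨t % n, Nat.mod_lt t hn⟩ = α.1 ⟨t, ht⟩ :=
      congrArg α.1 (Fin.ext he)
    rwa [h2] at h1
  refine ⟨?_, k, hk, N, hNo, hμN, ?_, ?_⟩
  · -- μ is a cycle
    show G.r (x.1 (q + 0)) = G.s (x.1 (q + (n - 1)))
    have h1 := x.2 (q + (n - 1))
    have h2 := hxper 0
    rw [Nat.add_zero] at h2
    rw [h1, show q + (n - 1) + 1 = q + n by omega, Nat.add_zero, ← h2]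
  · -- condition (1)
    rintro α β hαB hβB hne ⟨γ, hγN, hγr, hγs⟩
    obtain ⟨ω, hω⟩ := G.exists_fwd_path hsg (G.pathSource hn γ)
    have hα0 : α.1 ⟨0, hkn⟩ ∈ O'' 0 := by
      have := hblock α hαB 0 hkn
      rwa [Nat.zero_mod] at this
    obtain ⟨a, haA, hap, has⟩ := hVext _ (hO''V hα0)
    have hβ0 : β.1 ⟨0, hkn⟩ ∈ O'' 0 := by
      have := hblock β hβB 0 hkn
      rwa [Nat.zero_mod] at this
    obtain ⟨b, hbA, hbp, hbs⟩ := hVext _ (hO''V hβ0)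
    -- w1 : γ followed by ω
    have hf1 : ∀ j, j + 1 < n → G.s (G.pathFun hn γ j) = G.r (G.pathFun hn γ (j + 1)) := by
      intro j hj
      rw [G.pathFun_eq hn γ (show j < n by omega), G.pathFun_eq hn γ hj]
      exact γ.2 j hj
    have hl1 : 0 < n → G.s (G.pathFun hn γ (n - 1)) = G.r (ω.1 0) := by
      intro _
      rw [G.pathFun_eq hn γ (show n - 1 < n by omega)]
      exact hω.symm
    set w1 : G.InfPath := G.concat n (G.pathFun hn γ) ω hf1 hl1 with hw1def
    -- w2 : α followed by w1
    have hf2 : ∀ j, j + 1 < k * n →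
        G.s (G.pathFun hkn α j) = G.r (G.pathFun hkn α (j + 1)) := by
      intro j hj
      rw [G.pathFun_eq hkn α (show j < k * n by omega), G.pathFun_eq hkn α hj]
      exact α.2 j hj
    have hl2 : 0 < k * n → G.s (G.pathFun hkn α (k * n - 1)) = G.r (w1.1 0) := by
      intro _
      rw [G.pathFun_eq hkn α (show k * n - 1 < k * n by omega), hw1def, G.concat_lt hn,
        G.pathFun_eq hn γ hn]
      exact hγr.symm
    set w2 : G.InfPath := G.concat (k * n) (G.pathFun hkn α) w1 hf2 hl2 with hw2def
    have hl3 : 0 < q → G.s (a (q - 1)) = G.r (w2.1 0) := by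
      intro h0
      rw [hw2def, G.concat_lt hkn, G.pathFun_eq hkn α hkn]
      exact has h0
    set z1 : G.InfPath := G.concat q a w2 hap hl3 with hz1def
    -- w3 : β followed by ω
    have hf3 : ∀ j, j + 1 < k * n →
        G.s (G.pathFun hkn β j) = G.r (G.pathFun hkn β (j + 1)) := by
      intro j hj
      rw [G.pathFun_eq hkn β (show j < k * n by omega), G.pathFun_eq hkn β hj]
      exact β.2 j hj
    have hl4 : 0 < k * n → G.s (G.pathFun hkn β (k * n - 1)) = G.r (ω.1 0) := by
      intro _
      rw [G.pathFun_eq hkn β (show k * n - 1 < k * n by omega), hω]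
      exact hγs.symm
    set w3 : G.InfPath := G.concat (k * n) (G.pathFun hkn β) ω hf3 hl4 with hw3def
    have hl5 : 0 < q → G.s (b (q - 1)) = G.r (w3.1 0) := by
      intro h0
      rw [hw3def, G.concat_lt hkn, G.pathFun_eq hkn β hkn]
      exact hbs h0
    set z2 : G.InfPath := G.concat q b w3 hbp hl5 with hz2def
    -- coordinates
    have hz1a : ∀ j, j < q → z1.1 j = a j := by
      intro j hj
      rw [hz1def, G.concat_lt hj]
    have hz1α : ∀ j (_ : q ≤ j) (hd : j - q < k * n), z1.1 j = α.1 ⟨j - q, hd⟩ := by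
      intro j hj hd
      rw [hz1def, G.concat_ge hj, hw2def, G.concat_lt hd, G.pathFun_eq hkn α hd]
    have hz1γ : ∀ j (_ : q + k * n ≤ j) (hd : j - q - k * n < n),
        z1.1 j = γ.1 ⟨j - q - k * n, hd⟩ := by
      intro j hj hd
      rw [hz1def, G.concat_ge (show q ≤ j by omega), hw2def,
        G.concat_ge (show k * n ≤ j - q by omega), hw1def, G.concat_lt hd,
        G.pathFun_eq hn γ hd]
    have hz1ω : ∀ j (_ : q + k * n + n ≤ j), z1.1 j = ω.1 (j - q - k * n - n) := by
      intro j hj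
      rw [hz1def, G.concat_ge (show q ≤ j by omega), hw2def,
        G.concat_ge (show k * n ≤ j - q by omega), hw1def,
        G.concat_ge (show n ≤ j - q - k * n by omega)]
    have hz2b : ∀ j, j < q → z2.1 j = b j := by
      intro j hj
      rw [hz2def, G.concat_lt hj]
    have hz2β : ∀ j (_ : q ≤ j) (hd : j - q < k * n), z2.1 j = β.1 ⟨j - q, hd⟩ := by
      intro j hj hd
      rw [hz2def, G.concat_ge hj, hw3def, G.concat_lt hd, G.pathFun_eq hkn β hd]
    have hz2ω : ∀ j (_ : q + k * n ≤ j), z2.1 j = ω.1 (j - q - k * n) := by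
      intro j hj
      rw [hz2def, G.concat_ge (show q ≤ j by omega), hw3def,
        G.concat_ge (show k * n ≤ j - q by omega)]
    -- apply the key claim
    have heq : z1 = z2 := by
      apply key
      · intro j hj
        by_cases hjq : j < q
        · rw [hz1a j hjq]
          exact hAO j (haA j hjq)
        · have hd : j - q < k * n := by omega
          rw [hz1α j (by omega) hd]
          exact hO''sub j hj (by omega) (hblock α hαB (j - q) hd)
      · intro j hj
        by_cases hjq : j < q
        · rw [hz2b j hjq]
          exact hAO j (hbA j hjq)
        · have hd : j - q < k * n := by omega
          rw [hz2β j (by omega) hd]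
          exact hO''sub j hj (by omega) (hblock β hβB (j - q) hd)
      · intro t ht
        by_cases hcase : p + m + t - q < k * n
        · rw [hz1α (p + m + t) (by omega) hcase]
          have hmod : (p + m + t - q) % n = (m + t) % n := by
            rw [show p + m + t - q = n + (m + t) by omega, Nat.add_mod_left]
          rw [← hmod]
          exact hblock α hαB _ hcase
        · have hd' : p + m + t - q - k * n < n := by omega
          rw [hz1γ (p + m + t) (by omega) hd']
          have hmod : (m + t) % n = p + m + t - q - k * n := by
            have h1 : (m + t) % n = (n + (m + t)) % n := (Nat.add_mod_left n (m + t)).symm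
            have h2 : n + (m + t) = k * n + (p + m + t - q - k * n) := by omega
            rw [h1, h2, mul_add_mod', Nat.mod_eq_of_lt hd']
          rw [hmod]
          exact hγN ⟨_, hd'⟩
      · intro t ht
        have hd : q + m + t - q < k * n := by omega
        rw [hz2β (q + m + t) (by omega) hd]
        have hmod : (q + m + t - q) % n = (m + t) % n := by
          rw [show q + m + t - q = m + t by omega]
        rw [← hmod]
        exact hblock β hβB _ hd
      · intro t
        rw [hz1ω (t + (p + k * n)) (by omega), hz2ω (t + (q + k * n)) (by omega),
          show t + (p + k * n) - q - k * n - n = t by omega,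
          show t + (q + k * n) - q - k * n = t by omega]
    -- derive the contradiction
    apply hne
    apply Subtype.ext
    funext i
    have e1 := hz1α (q + (i : ℕ)) (by omega) (by have := i.2; omega)
    have e2 := hz2β (q + (i : ℕ)) (by omega) (by have := i.2; omega)
    rw [heq, e2] at e1
    have hfin : ∀ (μ : G.Path (k * n)) (hd : q + (i : ℕ) - q < k * n),
        μ.1 ⟨q + (i : ℕ) - q, hd⟩ = μ.1 i := by
      intro μ hd
      have hie : (⟨q + (i : ℕ) - q, hd⟩ : Fin (k * n)) = i := Fin.ext (show q + (i : ℕ) - q = (i : ℕ) by omega)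
      rw [hie]
    rw [hfin α, hfin β] at e1
    exact e1.symm
  · -- condition (2)
    rintro α hαB ⟨γ, hγN, hγcyc, hγent, hγr⟩
    obtain ⟨i, e', he'r, he'ne⟩ := hγent
    obtain ⟨ω', hω'⟩ := G.exists_fwd_path hsg (G.s e')
    have hi0 : (i : ℕ) < n := i.2
    set m₀ : ℕ := k + 2 with hm0def
    have hm0n : k * n ≤ m₀ * n := Nat.mul_le_mul_right n (by omega)
    have hnm0 : n ≤ m₀ * n := by
      have := Nat.mul_le_mul_right n (show 1 ≤ m₀ by omega)
      simpa using this
    have hpos0 : 0 < m₀ * n + (i : ℕ) := by omega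
    have hγ0 : γ.1 ⟨0, hn⟩ ∈ O'' 0 := hγN ⟨0, hn⟩
    obtain ⟨a, haA, hap, has⟩ := hVext _ (hO''V hγ0)
    -- inner2 : e' then ω'
    set inner2 : G.InfPath := G.concat 1 (fun _ => e') ω'
      (fun j hj => absurd hj (by omega)) (fun _ => hω'.symm) with hinner2def
    -- tailz : γ-periodic for m₀*n + i steps, then inner2
    have hfper : ∀ j, j + 1 < m₀ * n + (i : ℕ) →
        G.s (G.pathFun hn γ j) = G.r (G.pathFun hn γ (j + 1)) :=
      fun j _ => G.pathFun_path hn γ hγcyc j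
    have hlper : 0 < m₀ * n + (i : ℕ) →
        G.s (G.pathFun hn γ (m₀ * n + (i : ℕ) - 1)) = G.r (inner2.1 0) := by
      intro _
      rw [hinner2def, G.concat_lt (show (0:ℕ) < 1 by omega)]
      rw [G.pathFun_path' hn γ hγcyc _ hpos0]
      rw [G.pathFun_mod hn γ _ i (by rw [mul_add_mod', Nat.mod_eq_of_lt hi0])]
      exact he'r.symm
    set tailz : G.InfPath := G.concat (m₀ * n + (i : ℕ)) (G.pathFun hn γ) inner2
      hfper hlper with htailzdef
    have hlz : 0 < q → G.s (a (q - 1)) = G.r (tailz.1 0) := by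
      intro h0
      rw [htailzdef, G.concat_lt hpos0,
        G.pathFun_mod hn γ 0 ⟨0, hn⟩ (by simp)]
      exact has h0
    set z : G.InfPath := G.concat q a tailz hap hlz with hzdef
    -- y : prefix a, one copy of γ, then tailz
    have hfγ : ∀ j, j + 1 < n → G.s (G.pathFun hn γ j) = G.r (G.pathFun hn γ (j + 1)) :=
      fun j _ => G.pathFun_path hn γ hγcyc j
    have hlγ : 0 < n → G.s (G.pathFun hn γ (n - 1)) = G.r (tailz.1 0) := by
      intro _
      rw [htailzdef, G.concat_lt hpos0]
      rw [G.pathFun_path' hn γ hγcyc n hn]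
      rw [G.pathFun_mod hn γ n ⟨0, hn⟩ (by simp [Nat.mod_self]),
        G.pathFun_mod hn γ 0 ⟨0, hn⟩ (by simp)]
    set wy : G.InfPath := G.concat n (G.pathFun hn γ) tailz hfγ hlγ with hwydef
    have hly : 0 < q → G.s (a (q - 1)) = G.r (wy.1 0) := by
      intro h0
      rw [hwydef, G.concat_lt hn, G.pathFun_mod hn γ 0 ⟨0, hn⟩ (by simp)]
      exact has h0
    set y : G.InfPath := G.concat q a wy hap hly with hydef
    -- coordinates
    have htz : ∀ d, d < m₀ * n + (i : ℕ) → tailz.1 d = G.pathFun hn γ d := by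
      intro d hd
      rw [htailzdef, G.concat_lt hd]
    have htze : tailz.1 (m₀ * n + (i : ℕ)) = e' := by
      rw [htailzdef, G.concat_ge le_rfl, Nat.sub_self, hinner2def,
        G.concat_lt (show (0:ℕ) < 1 by omega)]
    have hza : ∀ j, j < q → z.1 j = a j := fun j hj => by rw [hzdef, G.concat_lt hj]
    have hzt : ∀ j, q ≤ j → z.1 j = tailz.1 (j - q) := fun j hj => by
      rw [hzdef, G.concat_ge hj]
    have hya : ∀ j, j < q → y.1 j = a j := fun j hj => by rw [hydef, G.concat_lt hj]
    have hyγ : ∀ j (_ : q ≤ j) (hd : j - q < n), y.1 j = G.pathFun hn γ (j - q) := by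
      intro j hj hd
      rw [hydef, G.concat_ge hj, hwydef, G.concat_lt hd]
    have hyt : ∀ j, q + n ≤ j → y.1 j = tailz.1 (j - q - n) := by
      intro j hj
      rw [hydef, G.concat_ge (show q ≤ j by omega), hwydef,
        G.concat_ge (show n ≤ j - q by omega)]
    -- apply the key claim
    have heq : y = z := by
      apply key
      · intro j hj
        by_cases hjq : j < q
        · rw [hya j hjq]
          exact hAO j (haA j hjq)
        · have hd : j - q < k * n := by omega
          by_cases hdn : j - q < n
          · rw [hyγ j (by omega) hdn,
              G.pathFun_mod hn γ (j - q) ⟨(j - q) % n, Nat.mod_lt _ hn⟩ rfl]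
            exact hO''sub j hj (by omega) (hγN ⟨(j - q) % n, Nat.mod_lt _ hn⟩)
          · rw [hyt j (by omega), htz _ (by omega),
              G.pathFun_mod hn γ (j - q - n) ⟨(j - q) % n, Nat.mod_lt _ hn⟩
                (by rw [← Nat.mod_eq_sub_mod (show n ≤ j - q by omega)])]
            exact hO''sub j hj (by omega) (hγN ⟨(j - q) % n, Nat.mod_lt _ hn⟩)
      · intro j hj
        by_cases hjq : j < q
        · rw [hza j hjq]
          exact hAO j (haA j hjq)
        · have hd : j - q < k * n := by omega
          rw [hzt j (by omega), htz _ (by omega),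
            G.pathFun_mod hn γ (j - q) ⟨(j - q) % n, Nat.mod_lt _ hn⟩ rfl]
          exact hO''sub j hj (by omega) (hγN ⟨(j - q) % n, Nat.mod_lt _ hn⟩)
      · intro t ht
        rw [hyt (p + m + t) (by omega), htz _ (by omega),
          show p + m + t - q - n = m + t by omega,
          G.pathFun_mod hn γ (m + t) ⟨(m + t) % n, Nat.mod_lt _ hn⟩ rfl]
        exact hγN ⟨(m + t) % n, Nat.mod_lt _ hn⟩
      · intro t ht
        rw [hzt (q + m + t) (by omega), htz _ (by omega),
          show q + m + t - q = m + t by omega,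
          G.pathFun_mod hn γ (m + t) ⟨(m + t) % n, Nat.mod_lt _ hn⟩ rfl]
        exact hγN ⟨(m + t) % n, Nat.mod_lt _ hn⟩
      · intro t
        rw [hyt (t + (p + k * n)) (by omega), hzt (t + (q + k * n)) (by omega),
          show t + (p + k * n) - q - n = t + k * n by omega,
          show t + (q + k * n) - q = t + k * n by omega]
    -- contradiction at position q + (m₀ * n + i)
    have hsub1 : (m₀ - 1) * n = m₀ * n - n := Nat.sub_one_mul m₀ n
    have hyS := hyt (q + (m₀ * n + (i : ℕ))) (by omega)
    rw [show q + (m₀ * n + (i : ℕ)) - q - n = (m₀ - 1) * n + (i : ℕ) by omega] at hyS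
    rw [htz _ (by omega),
      G.pathFun_mod hn γ _ i (by rw [mul_add_mod', Nat.mod_eq_of_lt hi0])] at hyS
    have hzS := hzt (q + (m₀ * n + (i : ℕ))) (by omega)
    rw [show q + (m₀ * n + (i : ℕ)) - q = m₀ * n + (i : ℕ) by omega, htze] at hzS
    rw [heq, hzS] at hyS
    exact he'ne hyS

/-- Lemma 3.5, positive case. -/
theorem main_pos [T2Space V] (hsg : G.sg = ∅) (g : G.Gamma) (hiso : g ∈ G.isoSet)
    (p q : ℕ) (hpq : (p : ℤ) - (q : ℤ) = g.1.2.1)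
    (hshift : G.shift^[p] g.1.1 = G.shift^[q] g.1.1) (hq : q < p) (hn : 0 < p - q) :
    g ∈ G.isoInterior ↔ G.segment g.1.1 q (p - q) ∈ G.B (p - q) hn :=
  ⟨G.main_pos_mp hsg g hiso p q hpq hshift hq hn,
    G.main_pos_mpr g hiso p q hpq hshift hq hn⟩

end TopGraph

/-- Lemma 3.5: membership of `(x, n, x)` in the interior of the isotropy is detected by
membership of the corresponding cycle in `B^n` (case `n > 0`) or `B^{-n}` (case `n < 0`). -/
theorem stmt0 {V E : Type} [TopologicalSpace V] [TopologicalSpace E]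
    [T2Space V] [T2Space E] [LocallyCompactSpace V] [LocallyCompactSpace E]
    [SecondCountableTopology V] [SecondCountableTopology E]
    (G : TopGraph V E)
    (hsg : G.sg = ∅)
    (g : G.Gamma) (hiso : g ∈ G.isoSet)
    (p q : ℕ) (hpq : (p : ℤ) - (q : ℤ) = g.1.2.1)
    (hshift : G.shift^[p] g.1.1 = G.shift^[q] g.1.1) :
    (∀ _ : 0 < g.1.2.1,
      (g ∈ G.isoInterior ↔ G.segment g.1.1 q (p - q) ∈ G.B (p - q) (by omega))) ∧
    (∀ _ : g.1.2.1 < 0,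
      (g ∈ G.isoInterior ↔ G.segment g.1.1 p (q - p) ∈ G.B (q - p) (by omega))) := by
  constructor
  · intro hpos
    have hq : q < p := by omega
    exact G.main_pos hsg g hiso p q hpq hshift hq (by omega)
  · intro hneg
    have hq : p < q := by omega
    have hiso' : G.swap g ∈ G.isoSet := by
      show g.1.2.2 = g.1.1
      exact hiso.symm
    have hpq' : (q : ℤ) - (p : ℤ) = (G.swap g).1.2.1 := by
      show (q : ℤ) - (p : ℤ) = -g.1.2.1
      omega
    have hshift' : G.shift^[q] (G.swap g).1.1 = G.shift^[p] (G.swap g).1.1 := by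
      show G.shift^[q] g.1.2.2 = G.shift^[p] g.1.2.2
      rw [← hiso]
      exact hshift.symm
    have h1 := G.main_pos hsg (G.swap g) hiso' q p hpq' hshift' hq (by omega)
    rw [← G.swap_interior_iff g] at h1
    rw [show (G.swap g).1.1 = g.1.1 from hiso.symm] at h1
    exact h1
end

section
/- Let E be a topological graph and fix n ≥ 1. Then r^n(B^n) = V_n and B^n = (r^n)^{-1}(V_n). -/
/-
A path without an entrance is determined by its range, so over an open set `W` of base points
of entrance-free cycles in `E^n` every path of `E^n` starting in `W` is such a cycle; taking
`k = 1` and `N = (r^n)⁻¹(W)` then shows `(r^n)⁻¹(V_n) ⊆ B^n`.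

Conversely, let `μ ∈ B^n` with witnesses `k` and `N`. Since `s` is a local homeomorphism, `s^n`
has a continuous local section `τ` through `μ` with values in `N`, and `g w = r^n(τ w)` is
continuous with fixed point `v = r^n(μ)`. Near `v` the iterates `w, g w, …, g^k w` stay in the
domain of `τ`, and the paths `τ(g^j w)` can be concatenated into two elements of `kN`, with
sources `g w` and `w`, joined by `τ w ∈ N`. Condition (1) forces them to coincide, hence
`g w = w`: `τ w` is a cycle based at `w`, and condition (2) shows it has no entrance.
-/

theorem ContinuousOn.exists_isOpen_forall_iterate_mem {X : Type*} [TopologicalSpace X]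
    {g : X → X} {W : Set X} (hg : ContinuousOn g W) (hW : IsOpen W) {v : X} (hv : v ∈ W)
    (hgv : g v = v) (k : ℕ) : ∃ U, IsOpen U ∧ v ∈ U ∧ ∀ w ∈ U, ∀ j ≤ k, g^[j] w ∈ W := by
  induction k with
  | zero => exact ⟨W, hW, hv, fun w hw j hj => by rwa [Nat.le_zero.1 hj]⟩
  | succ k ih =>
    obtain ⟨U, hU, hvU, hUW⟩ := ih
    refine ⟨W ∩ g ⁻¹' U, hg.isOpen_inter_preimage hW hU, ⟨hv, by rwa [Set.mem_preimage, hgv]⟩, ?_⟩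
    rintro w ⟨hw, hgw⟩ (_ | j) hj
    · exact hw
    · rw [Function.iterate_succ_apply]
      exact hUW _ hgw j (by omega)

namespace TopGraph

variable {V E : Type} [TopologicalSpace V] [TopologicalSpace E] (G : TopGraph V E)

theorem continuous_pathRange {n : ℕ} (hn : 0 < n) : Continuous (G.pathRange hn) :=
  G.r_cont.comp ((continuous_apply _).comp continuous_subtype_val)

theorem eq_of_pathRange_eq_of_not_hasEntrance {n : ℕ} (hn : 0 < n) {γ : G.Path n}
    (hγ : ¬ G.HasEntrance γ) {x : G.Path n} (hx : G.pathRange hn x = G.pathRange hn γ) :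
    x = γ := by
  have rigid : ∀ i e, G.r e = G.r (γ.1 i) → e = γ.1 i := fun i e he => by
    by_contra hne
    exact hγ ⟨i, e, he, hne⟩
  suffices ∀ i (hi : i < n), x.1 ⟨i, hi⟩ = γ.1 ⟨i, hi⟩ from
    Subtype.ext (funext fun i => this i i.2)
  intro i
  induction i with
  | zero => exact fun _ => rigid _ _ hx
  | succ i ih =>
    intro hi
    refine rigid _ _ ?_
    rw [← x.2 i hi, ← γ.2 i hi, ih]

theorem pathSource_eq_pathSource_block_last {n k : ℕ} (hn : 0 < n) (hk : 0 < k)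
    (α : G.Path (k * n)) :
    G.pathSource (Nat.mul_pos hk hn) α =
      G.pathSource hn (G.block α ⟨k - 1, Nat.sub_lt hk Nat.one_pos⟩) := by
  obtain ⟨k, rfl⟩ : ∃ k', k = k' + 1 := ⟨k - 1, by omega⟩
  refine congrArg (fun i => G.s (α.1 i)) (Fin.ext ?_)
  simp only [Nat.add_sub_cancel, Nat.succ_mul]
  omega

theorem ext_blocks {n k : ℕ} {α β : G.Path (k * n)} (h : ∀ j, G.block α j = G.block β j) :
    α = β := by
  refine Subtype.ext (funext fun i => ?_)
  have := congrArg (fun γ : G.Path n => γ.1 i.modNat) (h i.divNat)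
  simpa [block, Fin.divNat, Fin.modNat, Nat.div_add_mod'] using this

theorem isPathFn_concat {n k : ℕ} (hn : 0 < n) (p : ℕ → G.Path n)
    (hp : ∀ j, j + 1 < k → G.pathSource hn (p j) = G.pathRange hn (p (j + 1))) :
    G.IsPathFn (fun i : Fin (k * n) => (p (i / n)).1 ⟨i % n, Nat.mod_lt _ hn⟩) := by
  intro i hi
  obtain ⟨q, r, hr, rfl⟩ : ∃ q r, r < n ∧ i = q * n + r :=
    ⟨i / n, i % n, Nat.mod_lt _ hn, (Nat.div_add_mod' i n).symm⟩
  have hdiv : ∀ q r, r < n → (q * n + r) / n = q ∧ (q * n + r) % n = r := fun q r hr => by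
    rw [Nat.add_comm, Nat.add_mul_div_right _ _ hn, Nat.add_mul_mod_self_right,
      Nat.div_eq_of_lt hr, Nat.mod_eq_of_lt hr, Nat.zero_add]
    exact ⟨rfl, rfl⟩
  simp only [(hdiv q r hr).1, (hdiv q r hr).2]
  rcases Nat.lt_or_ge (r + 1) n with hr1 | hr1
  · simp only [Nat.add_assoc, (hdiv q (r + 1) hr1).1, (hdiv q (r + 1) hr1).2]
    exact (p q).2 r hr1
  · obtain rfl : r = n - 1 := by omega
    have hsucc : q * n + (n - 1) + 1 = (q + 1) * n + 0 := by rw [Nat.succ_mul]; omega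
    have hqk : q + 1 < k := Nat.lt_of_mul_lt_mul_right (a := n) (by omega)
    simp only [hsucc, (hdiv (q + 1) 0 hn).1, (hdiv (q + 1) 0 hn).2]
    exact hp q hqk

theorem exists_block_eq {n k : ℕ} (hn : 0 < n) (p : ℕ → G.Path n)
    (hp : ∀ j, j + 1 < k → G.pathSource hn (p j) = G.pathRange hn (p (j + 1))) :
    ∃ α : G.Path (k * n), ∀ j, G.block α j = p j := by
  refine ⟨⟨_, G.isPathFn_concat hn p hp⟩, fun j => Subtype.ext (funext fun i => ?_)⟩
  simp only [block, Nat.add_comm (j * n), Nat.add_mul_div_right _ _ hn, Nat.div_eq_of_lt i.2,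
    Nat.zero_add, Nat.add_mul_mod_self_right, Nat.mod_eq_of_lt i.2]

theorem isPathFn_cons {m : ℕ} {e : E} {x : Fin (m + 1) → E} (hx : G.IsPathFn x)
    (he : G.s e = G.r (x 0)) : G.IsPathFn (Fin.cons e x : Fin (m + 2) → E) := by
  rintro (_ | i) hi
  · exact he
  · exact hx i (by omega)

theorem exists_continuousOn_section (m : ℕ) (μ : Fin (m + 1) → E) (hμ : G.IsPathFn μ) :
    ∃ W : Set V, ∃ τ : V → Fin (m + 1) → E, IsOpen W ∧ G.s (μ (Fin.last m)) ∈ W ∧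
      ContinuousOn τ W ∧ (∀ w ∈ W, G.IsPathFn (τ w) ∧ G.s (τ w (Fin.last m)) = w) ∧
      τ (G.s (μ (Fin.last m))) = μ := by
  induction m with
  | zero =>
    obtain ⟨e, hμe, hs⟩ := G.s_locHomeo (μ 0)
    refine ⟨e.target, fun w _ => e.symm w, e.open_target, ?_, ?_, fun w hw => ⟨?_, ?_⟩, ?_⟩
    · rw [hs]
      exact e.map_source hμe
    · exact continuousOn_pi.2 fun _ => e.continuousOn_symm
    · exact fun i hi => absurd hi (by omega)
    · rw [hs]
      exact e.right_inv hw
    · funext i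
      rw [Fin.fin_one_eq_zero i, hs]
      exact e.left_inv hμe
  | succ m ih =>
    obtain ⟨W, τ, hW, hμW, hτc, hτ, hτμ⟩ := ih (Fin.tail μ) fun i hi => hμ (i + 1) (by omega)
    change τ (G.s (μ (Fin.last (m + 1)))) = Fin.tail μ at hτμ
    obtain ⟨e, hμe, hs⟩ := G.s_locHomeo (μ 0)
    have hrc : ContinuousOn (fun w => G.r (τ w 0)) W :=
      G.r_cont.comp_continuousOn ((continuous_apply 0).comp_continuousOn hτc)
    have hμ01 : G.r (Fin.tail μ 0) = e (μ 0) := by rw [← hs]; exact (hμ 0 (by omega)).symm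
    refine ⟨W ∩ (fun w => G.r (τ w 0)) ⁻¹' e.target,
      fun w => Fin.cons (e.symm (G.r (τ w 0))) (τ w), hrc.isOpen_inter_preimage hW e.open_target,
      ⟨hμW, ?_⟩, ?_, ?_, ?_⟩
    · rw [Set.mem_preimage, hτμ, hμ01]
      exact e.map_source hμe
    · exact (e.continuousOn_symm.comp (hrc.mono Set.inter_subset_left) fun w hw => hw.2).finCons
        (hτc.mono Set.inter_subset_left)
    · rintro w ⟨hwW, hwe⟩
      refine ⟨G.isPathFn_cons (hτ w hwW).1 ?_, (hτ w hwW).2⟩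
      rw [hs]
      exact e.right_inv hwe
    · simp only [hτμ, hμ01, e.left_inv hμe]
      exact Fin.cons_self_tail μ

theorem exists_continuousOn_section_mem {n : ℕ} (hn : 0 < n) {N : Set (G.Path n)}
    (hN : IsOpen N) {μ : G.Path n} (hμ : μ ∈ N) :
    ∃ W : Set V, ∃ τ : V → G.Path n, IsOpen W ∧ G.pathSource hn μ ∈ W ∧ ContinuousOn τ W ∧
      (∀ w ∈ W, τ w ∈ N ∧ G.pathSource hn (τ w) = w) ∧ τ (G.pathSource hn μ) = μ := by
  obtain ⟨m, rfl⟩ : ∃ m, n = m + 1 := ⟨n - 1, by omega⟩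
  obtain ⟨W, τ, hW, hμW, hτc, hτ, hτμ⟩ := G.exists_continuousOn_section m μ.1 μ.2
  classical
  let τ' : V → G.Path (m + 1) := fun w => if h : G.IsPathFn (τ w) then ⟨τ w, h⟩ else μ
  have hτ' : ∀ w ∈ W, (τ' w).1 = τ w := fun w hw => by simp [τ', (hτ w hw).1]
  have hτ'c : ContinuousOn τ' W :=
    Topology.IsInducing.subtypeVal.continuousOn_iff.2 (hτc.congr hτ')
  have hτ'μ : τ' (G.pathSource hn μ) = μ := Subtype.ext ((hτ' _ hμW).trans hτμ)
  refine ⟨W ∩ τ' ⁻¹' N, τ', hτ'c.isOpen_inter_preimage hW hN, ⟨hμW, ?_⟩,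
    hτ'c.mono Set.inter_subset_left, fun w hw => ⟨hw.2, ?_⟩, hτ'μ⟩
  · rwa [Set.mem_preimage, hτ'μ]
  · exact (congrArg (fun x : Fin (m + 1) → E => G.s (x (Fin.last m))) (hτ' w hw.1)).trans
      (hτ w hw.1).2

/-- Condition (1) in the definition of `B^n`. -/
def NoPathBetweenSources {n k : ℕ} (hn : 0 < n) (hk : 0 < k) (N : Set (G.Path n)) : Prop :=
  ∀ α β : G.Path (k * n), G.BlocksIn N α → G.BlocksIn N β → α ≠ β →
    ¬ ∃ γ ∈ N, G.pathRange hn γ = G.pathSource (Nat.mul_pos hk hn) α ∧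
      G.pathSource hn γ = G.pathSource (Nat.mul_pos hk hn) β

/-- Condition (2) in the definition of `B^n`. -/
def NoEntranceCycleAtSource {n k : ℕ} (hn : 0 < n) (hk : 0 < k) (N : Set (G.Path n)) :
    Prop :=
  ∀ α : G.Path (k * n), G.BlocksIn N α →
    ¬ ∃ γ ∈ N, G.IsCycle hn γ ∧ G.HasEntrance γ ∧
      G.pathRange hn γ = G.pathSource (Nat.mul_pos hk hn) α

theorem mem_B_iff {n : ℕ} (hn : 0 < n) {μ : G.Path n} :
    μ ∈ G.B n hn ↔ G.IsCycle hn μ ∧ ∃ (k : ℕ) (hk : 0 < k) (N : Set (G.Path n)),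
      IsOpen N ∧ μ ∈ N ∧ G.NoPathBetweenSources hn hk N ∧ G.NoEntranceCycleAtSource hn hk N :=
  Iff.rfl

theorem isCycle_and_not_hasEntrance_of_chain {n k : ℕ} (hn : 0 < n) (hk : 0 < k)
    {N : Set (G.Path n)} (h₁ : G.NoPathBetweenSources hn hk N)
    (h₂ : G.NoEntranceCycleAtSource hn hk N) (p : ℕ → G.Path n) (hpN : ∀ j ≤ k, p j ∈ N)
    (hp : ∀ j < k, G.pathRange hn (p j) = G.pathSource hn (p (j + 1))) :
    G.IsCycle hn (p 0) ∧ ¬ G.HasEntrance (p 0) := by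
  have chain : ∀ a ≤ 1, ∃ α : G.Path (k * n), G.BlocksIn N α ∧
      G.pathSource (Nat.mul_pos hk hn) α = G.pathSource hn (p a) := by
    intro a ha
    obtain ⟨α, hα⟩ := G.exists_block_eq (k := k) hn (fun j => p (a + (k - 1 - j))) fun j hj => by
      rw [hp (a + (k - 1 - (j + 1))) (by omega)]
      congr 2
      omega
    refine ⟨α, fun j => hα j ▸ hpN _ (by omega), ?_⟩
    rw [G.pathSource_eq_pathSource_block_last hn hk, hα, Nat.sub_self, Nat.add_zero]
  obtain ⟨A, hAN, hA⟩ := chain 1 le_rfl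
  obtain ⟨B, hBN, hB⟩ := chain 0 zero_le_one
  have hAB : A = B := by
    by_contra hne
    exact h₁ A B hAN hBN hne ⟨p 0, hpN 0 k.zero_le, by rw [hA, hp 0 hk], hB.symm⟩
  have hcyc : G.IsCycle hn (p 0) := by
    rw [IsCycle, hp 0 hk, ← hA, hAB, hB]
  exact ⟨hcyc, fun hent => h₂ B hBN ⟨p 0, hpN 0 k.zero_le, hcyc, hent, hcyc.trans hB.symm⟩⟩

theorem pathRange_mem_Vset_of_mem_B {n : ℕ} (hn : 0 < n) {μ : G.Path n} (hμ : μ ∈ G.B n hn) :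
    G.pathRange hn μ ∈ G.Vset n hn := by
  obtain ⟨hμc, k, hk, N, hN, hμN, h₁, h₂⟩ := (G.mem_B_iff hn).1 hμ
  obtain ⟨W, τ, hW, hμW, hτc, hτ, hτμ⟩ := G.exists_continuousOn_section_mem hn hN hμN
  let g : V → V := fun w => G.pathRange hn (τ w)
  have hgv : g (G.pathSource hn μ) = G.pathSource hn μ := by
    simp only [g, hτμ]
    exact hμc
  obtain ⟨U, hU, hμU, hUW⟩ := ((G.continuous_pathRange hn).comp_continuousOn hτc
    |>.exists_isOpen_forall_iterate_mem hW hμW hgv k)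
  refine ⟨U, hU, hμc ▸ hμU, fun w hw => ?_⟩
  have hp : ∀ j ≤ k, τ (g^[j] w) ∈ N ∧ G.pathSource hn (τ (g^[j] w)) = g^[j] w :=
    fun j hj => hτ _ (hUW w hw j hj)
  obtain ⟨hc, hne⟩ := G.isCycle_and_not_hasEntrance_of_chain hn hk h₁ h₂
    (fun j => τ (g^[j] w)) (fun j hj => (hp j hj).1) fun j hj => by
      rw [(hp (j + 1) hj).2, Function.iterate_succ_apply']
  exact ⟨τ w, hc, hne, hc.trans (hp 0 k.zero_le).2⟩

theorem mem_B_of_pathRange_mem_Vset {n : ℕ} (hn : 0 < n) {μ : G.Path n}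
    (hμ : G.pathRange hn μ ∈ G.Vset n hn) : μ ∈ G.B n hn := by
  obtain ⟨W, hW, hμW, hWc⟩ := hμ
  have hcyc : ∀ x : G.Path n, G.pathRange hn x ∈ W → G.IsCycle hn x ∧ ¬ G.HasEntrance x := by
    intro x hx
    obtain ⟨γ, hγc, hγe, hγr⟩ := hWc _ hx
    obtain rfl := G.eq_of_pathRange_eq_of_not_hasEntrance hn hγe hγr.symm
    exact ⟨hγc, hγe⟩
  refine (G.mem_B_iff hn).2 ⟨(hcyc μ hμW).1, 1, Nat.one_pos, G.pathRange hn ⁻¹' W,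
    hW.preimage (G.continuous_pathRange hn), hμW, ?_, ?_⟩
  · rintro α β hα hβ hαβ ⟨γ, hγW, hγα, hγβ⟩
    let a := G.block α ⟨0, Nat.one_pos⟩
    let b := G.block β ⟨0, Nat.one_pos⟩
    have hsa : G.pathSource _ α = G.pathRange hn a :=
      (G.pathSource_eq_pathSource_block_last hn Nat.one_pos α).trans (hcyc a (hα _)).1.symm
    have hsb : G.pathSource _ β = G.pathRange hn b :=
      (G.pathSource_eq_pathSource_block_last hn Nat.one_pos β).trans (hcyc b (hβ _)).1.symm
    have hγc := (hcyc γ hγW).1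
    have hba : b = a := G.eq_of_pathRange_eq_of_not_hasEntrance hn (hcyc a (hα _)).2 <| by
      rw [← hsa, ← hγα, hγc, hγβ, hsb]
    refine hαβ (G.ext_blocks fun j => ?_)
    rw [Subsingleton.elim j ⟨0, Nat.one_pos⟩]
    exact hba.symm
  · rintro α - ⟨γ, hγW, -, hγe, -⟩
    exact (hcyc γ hγW).2 hγe

end TopGraph

theorem stmt2_general {V E : Type} [TopologicalSpace V] [TopologicalSpace E]
    (G : TopGraph V E)
    (n : ℕ) (hn : 0 < n) :
    G.pathRange hn '' G.B n hn = G.Vset n hn ∧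
    G.B n hn = G.pathRange hn ⁻¹' G.Vset n hn := by
  have hB : G.B n hn = G.pathRange hn ⁻¹' G.Vset n hn :=
    Set.ext fun _ => ⟨G.pathRange_mem_Vset_of_mem_B hn, G.mem_B_of_pathRange_mem_Vset hn⟩
  refine ⟨?_, hB⟩
  rw [hB, Set.image_preimage_eq_iff]
  rintro v ⟨W, -, hvW, hWc⟩
  obtain ⟨γ, -, -, hγ⟩ := hWc v hvW
  exact ⟨γ, hγ⟩

/-- Theorem 3.8, first part: `r^n(B^n) = V_n` and `B^n = (r^n)⁻¹(V_n)`. -/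
theorem stmt2 {V E : Type} [TopologicalSpace V] [TopologicalSpace E]
    [T2Space V] [T2Space E] [LocallyCompactSpace V] [LocallyCompactSpace E]
    [SecondCountableTopology V] [SecondCountableTopology E]
    (G : TopGraph V E)
    (n : ℕ) (hn : 0 < n) :
    G.pathRange hn '' G.B n hn = G.Vset n hn ∧
    G.B n hn = G.pathRange hn ⁻¹' G.Vset n hn :=
  stmt2_general G n hn
end

section
/- Let E be a topological graph and n ≥ 1. Then every element of B^n is a cycle in E^n that has no entrance. -/
/-- Remark 3.4: every element of `B^n` is a cycle without an entrance. -/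
theorem stmt6 {V E : Type} [TopologicalSpace V] [TopologicalSpace E]
    [T2Space V] [T2Space E] [LocallyCompactSpace V] [LocallyCompactSpace E]
    [SecondCountableTopology V] [SecondCountableTopology E]
    (G : TopGraph V E)
    (n : ℕ) (hn : 0 < n) (μ : G.Path n) (hμ : μ ∈ G.B n hn) :
    G.IsCycle hn μ ∧ ¬ G.HasEntrance μ := by
  obtain ⟨hcyc, k, hk, N, hNopen, hμN, h1, h2⟩ := hμ
  refine ⟨hcyc, fun hent => ?_⟩
  have hkn : 0 < k * n := Nat.mul_pos hk hn
  have hmod : ∀ i : ℕ, i % n < n := fun i => Nat.mod_lt _ hn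
  have hrep : G.IsPathFn (fun i : Fin (k*n) => μ.1 ⟨(i:ℕ) % n, hmod _⟩) := by
    intro i h
    show G.s (μ.1 ⟨i % n, hmod _⟩) = G.r (μ.1 ⟨(i+1) % n, hmod _⟩)
    by_cases hc : i % n + 1 < n
    · have e1 : (i+1) % n = i % n + 1 := by
        conv_lhs => rw [← Nat.mod_add_div i n, Nat.add_right_comm]
        rw [Nat.add_mul_mod_self_left, Nat.mod_eq_of_lt hc]
      have h2 := μ.2 (i % n) hc
      rw [show (⟨(i+1) % n, hmod _⟩ : Fin n) = ⟨i % n + 1, hc⟩ from Fin.ext e1]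
      exact h2
    · have hm : i % n = n - 1 := by have := hmod i; omega
      have e1 : (i+1) % n = 0 := by
        conv_lhs => rw [← Nat.mod_add_div i n, Nat.add_right_comm]
        rw [Nat.add_mul_mod_self_left, hm]
        have h3 : n - 1 + 1 = n := by omega
        rw [h3, Nat.mod_self]
      have hcc : G.r (μ.1 ⟨0, hn⟩) = G.s (μ.1 ⟨n - 1, Nat.sub_lt hn Nat.one_pos⟩) := hcyc
      rw [show (⟨i % n, hmod _⟩ : Fin n) = ⟨n-1, Nat.sub_lt hn Nat.one_pos⟩ from Fin.ext hm,
        show (⟨(i+1) % n, hmod _⟩ : Fin n) = ⟨0, hn⟩ from Fin.ext e1]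
      exact hcc.symm
  set α : G.Path (k*n) := ⟨_, hrep⟩ with hα
  have hblocks : G.BlocksIn N α := by
    intro j
    have : G.block α j = μ := by
      apply Subtype.ext; funext i
      show μ.1 ⟨((j:ℕ) * n + (i:ℕ)) % n, hmod _⟩ = μ.1 i
      have hval : ((j:ℕ) * n + (i:ℕ)) % n = (i:ℕ) := by
        rw [Nat.add_comm, Nat.add_mul_mod_self_right]; exact Nat.mod_eq_of_lt i.2
      rw [show (⟨((j:ℕ) * n + (i:ℕ)) % n, hmod _⟩ : Fin n) = i from Fin.ext hval]
    rw [this]; exact hμN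
  apply h2 α hblocks
  refine ⟨μ, hμN, hcyc, hent, ?_⟩
  have e2 : (k * n - 1) % n = n - 1 := by
    have : k * n - 1 = (n - 1) + n * (k - 1) := by
      cases k with
      | zero => omega
      | succ m => simp [Nat.succ_mul, Nat.mul_comm]; omega
    rw [this, Nat.add_mul_mod_self_left, Nat.mod_eq_of_lt (by omega)]
  show G.pathRange hn μ = G.s (μ.1 ⟨(k*n - 1) % n, hmod _⟩)
  rw [show (⟨(k*n-1) % n, hmod _⟩ : Fin n) = ⟨n-1, Nat.sub_lt hn Nat.one_pos⟩ from Fin.ext e2]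
  exact hcyc
end

section
/- Let E be a topological graph with no singular vertices. Then for every n ≥ 1 the map r^n : E^n → E^0, μ ↦ r(μ_1), is proper (preimages of compact sets are compact), and hence is a closed map. -/
/-! Without singular vertices every vertex is a finite receiver, so `r` is proper. The `i`-th
edge of a path with range in a compact `K` then lies in the compact set obtained from `K` by
applying `r⁻¹` and `s` alternately, so `(r^n)⁻¹(K)` is a closed subset of a product of compact
sets. A proper map into a locally compact Hausdorff space is closed. -/

namespace TopGraph

variable {V E : Type} [TopologicalSpace V] [TopologicalSpace E] (G : TopGraph V E)

theorem mem_finRecv_of_sg_eq_empty (hsg : G.sg = ∅) (v : V) : v ∈ G.finRecv :=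
  (Set.notMem_compl_iff.mp (hsg ▸ Set.notMem_empty v : v ∉ G.sg)).1

def layer (K : Set V) : ℕ → Set E
  | 0 => G.r ⁻¹' K
  | i + 1 => G.r ⁻¹' (G.s '' layer K i)

theorem IsPathFn.mem_layer {G : TopGraph V E} {n : ℕ} {μ : Fin n → E} (hμ : G.IsPathFn μ)
    (hn : 0 < n) {K : Set V} (h0 : G.r (μ ⟨0, hn⟩) ∈ K) (i : Fin n) : μ i ∈ G.layer K i := by
  obtain ⟨i, hi⟩ := i
  induction i with
  | zero => exact h0
  | succ i ih => exact ⟨μ ⟨i, Nat.lt_of_succ_lt hi⟩, ih (Nat.lt_of_succ_lt hi), hμ i hi⟩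

variable [T2Space V]

theorem isCompact_r_preimage (hfin : ∀ v : V, v ∈ G.finRecv) {K : Set V} (hK : IsCompact K) :
    IsCompact (G.r ⁻¹' K) := by
  choose N hNopen hNmem hNcpt using hfin
  obtain ⟨t, ht⟩ := hK.elim_finite_subcover N hNopen
    (fun v _ => Set.mem_iUnion.2 ⟨v, hNmem v⟩)
  refine (t.finite_toSet.isCompact_biUnion fun v _ => hNcpt v).of_isClosed_subset
    (hK.isClosed.preimage G.r_cont) fun e he => ?_
  obtain ⟨v, hv, hev⟩ := Set.mem_iUnion₂.1 (ht he)
  exact Set.mem_iUnion₂.2 ⟨v, hv, subset_closure hev⟩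

theorem isCompact_layer (hfin : ∀ v : V, v ∈ G.finRecv) {K : Set V} (hK : IsCompact K) :
    ∀ i, IsCompact (G.layer K i)
  | 0 => G.isCompact_r_preimage hfin hK
  | i + 1 => G.isCompact_r_preimage hfin
      ((isCompact_layer hfin hK i).image G.s_locHomeo.continuous)

theorem isClosed_setOf_isPathFn (n : ℕ) : IsClosed {μ : Fin n → E | G.IsPathFn μ} := by
  simp only [IsPathFn, Set.ofPred_forall]
  exact isClosed_iInter fun i => isClosed_iInter fun h =>
    isClosed_eq (G.s_locHomeo.continuous.comp (continuous_apply _))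
      (G.r_cont.comp (continuous_apply _))

theorem isCompact_pathRange_preimage (hfin : ∀ v : V, v ∈ G.finRecv) {n : ℕ} (hn : 0 < n)
    {K : Set V} (hK : IsCompact K) : IsCompact (G.pathRange hn ⁻¹' K) := by
  have hpaths : IsCompact ({μ | G.IsPathFn μ} ∩ {μ | G.r (μ ⟨0, hn⟩) ∈ K}) := by
    refine (isCompact_univ_pi fun i : Fin n => G.isCompact_layer hfin hK i).of_isClosed_subset
      ((G.isClosed_setOf_isPathFn n).inter (hK.isClosed.preimage
        (G.r_cont.comp (continuous_apply _)))) ?_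
    rintro μ ⟨hμ, h0⟩ i -
    exact hμ.mem_layer hn h0 i
  have himage : (Subtype.val : G.Path n → Fin n → E) '' (G.pathRange hn ⁻¹' K) =
      {μ | G.IsPathFn μ} ∩ {μ | G.r (μ ⟨0, hn⟩) ∈ K} := by
    ext μ
    exact ⟨fun ⟨ν, hν, hνμ⟩ => hνμ ▸ ⟨ν.2, hν⟩, fun ⟨hμ, h0⟩ => ⟨⟨μ, hμ⟩, h0, rfl⟩⟩
  exact Topology.IsEmbedding.subtypeVal.isCompact_iff.mpr (himage ▸ hpaths)

theorem isProperMap_pathRange [LocallyCompactSpace V] (hfin : ∀ v : V, v ∈ G.finRecv) {n : ℕ}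
    (hn : 0 < n) : IsProperMap (G.pathRange hn) :=
  isProperMap_iff_isCompact_preimage.mpr
    ⟨G.continuous_pathRange hn, fun _ hK => G.isCompact_pathRange_preimage hfin hn hK⟩

end TopGraph

theorem stmt7_general {V E : Type} [TopologicalSpace V] [TopologicalSpace E]
    [T2Space V] [LocallyCompactSpace V]
    (G : TopGraph V E)
    (hsg : G.sg = ∅) (n : ℕ) (hn : 0 < n) :
    (∀ K : Set V, IsCompact K → IsCompact (G.pathRange hn ⁻¹' K)) ∧
    IsClosedMap (G.pathRange hn) := by
  have hfin := G.mem_finRecv_of_sg_eq_empty hsg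
  exact ⟨fun _ hK => G.isCompact_pathRange_preimage hfin hn hK,
    (G.isProperMap_pathRange hfin hn).isClosedMap⟩

/-- If `E` has no singular vertices, then `r^n : E^n → E^0` is proper, hence a closed map. -/
theorem stmt7 {V E : Type} [TopologicalSpace V] [TopologicalSpace E]
    [T2Space V] [T2Space E] [LocallyCompactSpace V] [LocallyCompactSpace E]
    [SecondCountableTopology V] [SecondCountableTopology E]
    (G : TopGraph V E)
    (hsg : G.sg = ∅) (n : ℕ) (hn : 0 < n) :
    (∀ K : Set V, IsCompact K → IsCompact (G.pathRange hn ⁻¹' K)) ∧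
    IsClosedMap (G.pathRange hn) :=
  stmt7_general G hsg n hn
end
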